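/- arXiv:1307.8383 — 6 statements merged into one kernel-verified Lean document; each statement's English description precedes it below -/
import Mathlib

section
/- Consider the singular ODE system (x²−ε)·dy/dx = M(ε)·y + f(x,y,ε) for y ∈ ℂ^m, where M is an m×m matrix with entries in ℂ[[ε]] whose constant-term matrix M(0) is invertible, and f = (f₁,…,f_m) is an m-tuple of formal power series in the variables (x, y₁,…,y_m, ε) such that: (i) the part of f of degree 0 in the variables y is divisible by x²−ε in ℂ[[x,ε]]^m, and (ii) for every monomial of degree 1 in y, its coefficient (a series in ℂ[[x,ε]]) has zero constant term. Then there exists a unique u ∈ ℂ[[x,ε]]^m such that ŷ := (x²−ε)·u satisfies (x²−ε)·∂ŷ/∂x = M(ε)·ŷ + f(x, ŷ, ε) as an identity of formal power series in (x,ε); i.e., the system has a unique formal solution of the form ŷ(x,ε) = (x²−ε)·∑_{k,j≥0} y_{kj} x^k ε^j with y_{kj} ∈ ℂ^m. -/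
/-!
Put `ŷ = (x² - ε) u` and divide the system by `x² - ε`. Since `f(x, 0, ε)` is divisible by
`x² - ε` and the rest of `f(x, (x² - ε) u, ε)` is a combination of the `(x² - ε) uₖ`, what is
left is `M(0) u = T(u)` with
`T(u) = 2x u + (x² - ε) ∂ₓu - (M(ε) - M(0)) u - f(x, 0, ε)/(x² - ε) - (the rest)/(x² - ε)`.
Give `x` weight 1 and `ε` weight 2, so that `x² - ε` is homogeneous of weight 2. Then the
coefficients of weight `≤ n` of `T(u)` only depend on those of weight `< n` of `u`: `∂ₓ` loses
one unit of weight and `x² - ε` restores two, `M(ε) - M(0)` is divisible by `ε`, and the terms of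
`f` linear in `y` have coefficients vanishing at the origin. Hence `u ↦ M(0)⁻¹ T(u)` is a
contraction for the weight filtration and has exactly one fixed point.
-/

open MvPowerSeries

/-- Formal substitution of an `m`-tuple `y` of formal power series in `(x, ε)` (each
with zero constant term) for the variables `y₁, …, y_m` in a formal power series `f`
in the variables `(y₁, …, y_m, x, ε)`: the coefficient of a monomial of the result is
the (finite, under the zero-constant-term hypothesis) sum over all monomials `d` of
`f` of the corresponding contribution. Variables: `Sum.inl i` is `yᵢ`, `Sum.inr 0` is
`x`, `Sum.inr 1` is `ε`. -/
noncomputable def substY (m : ℕ) (f : MvPowerSeries (Fin m ⊕ Fin 2) ℂ)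
    (y : Fin m → MvPowerSeries (Fin 2) ℂ) : MvPowerSeries (Fin 2) ℂ :=
  fun e => ∑ᶠ d : (Fin m ⊕ Fin 2) →₀ ℕ,
    MvPowerSeries.coeff d f *
      MvPowerSeries.coeff e
        (MvPowerSeries.X (0 : Fin 2) ^ d (Sum.inr 0) *
          MvPowerSeries.X (1 : Fin 2) ^ d (Sum.inr 1) *
          ∏ i : Fin m, y i ^ d (Sum.inl i))

/-- The formal partial derivative `∂/∂x` on `ℂ[[x, ε]]` (the variable `x` being the
variable `0 : Fin 2`). -/
noncomputable def dX (F : MvPowerSeries (Fin 2) ℂ) : MvPowerSeries (Fin 2) ℂ :=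
  fun e => ((e 0 + 1 : ℕ) : ℂ) *
    MvPowerSeries.coeff (e + Finsupp.single (0 : Fin 2) 1) F

/-- The embedding `ℂ[[ε]] → ℂ[[x, ε]]`. -/
noncomputable def embEps (g : PowerSeries ℂ) : MvPowerSeries (Fin 2) ℂ :=
  fun e => if e 0 = 0 then PowerSeries.coeff (e 1) g else 0

namespace MvPowerSeries

section WeightedOrderIdeal

variable {σ R : Type*} [CommRing R] (w : σ → ℕ)

def weightedOrderIdeal (n : ℕ) : Ideal (MvPowerSeries σ R) where
  carrier := {f | n ≤ f.weightedOrder w}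
  zero_mem' := by simp
  add_mem' hf hg := (le_min hf hg).trans (min_weightedOrder_le_add w)
  smul_mem' _ _ hf := hf.trans (le_add_self.trans (le_weightedOrder_mul w))

variable {w}

theorem mem_weightedOrderIdeal_iff {n : ℕ} {f : MvPowerSeries σ R} :
    f ∈ weightedOrderIdeal w n ↔ ∀ d, Finsupp.weight w d < n → coeff d f = 0 :=
  ⟨fun hf _ hd => coeff_eq_zero_of_lt_weightedOrder w (lt_of_lt_of_le (by exact_mod_cast hd) hf),
    nat_le_weightedOrder w⟩

theorem weightedOrderIdeal_antitone : Antitone (weightedOrderIdeal (R := R) w) :=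
  fun _ _ hmn _ hf =>
    mem_weightedOrderIdeal_iff.2 fun d hd => mem_weightedOrderIdeal_iff.1 hf d (by omega)

theorem mul_mem_weightedOrderIdeal {a b : ℕ} {f g : MvPowerSeries σ R}
    (hf : f ∈ weightedOrderIdeal w a) (hg : g ∈ weightedOrderIdeal w b) :
    f * g ∈ weightedOrderIdeal w (a + b) :=
  (by push_cast; exact add_le_add hf hg : ((a + b : ℕ) : ℕ∞) ≤ _).trans
    (le_weightedOrder_mul w)

theorem X_mem_weightedOrderIdeal (s : σ) :
    (X s : MvPowerSeries σ R) ∈ weightedOrderIdeal w (w s) := by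
  classical
  refine mem_weightedOrderIdeal_iff.2 fun d hd => ?_
  rw [coeff_X, if_neg]
  rintro rfl
  rw [Finsupp.weight_single, one_smul] at hd
  exact lt_irrefl _ hd

theorem mem_weightedOrderIdeal_one_of_constantCoeff (hw : ∀ s, w s ≠ 0) {f : MvPowerSeries σ R}
    (hf : constantCoeff f = 0) : f ∈ weightedOrderIdeal w 1 := by
  have := Finsupp.nonTorsionWeight_of ℕ w hw
  refine mem_weightedOrderIdeal_iff.2 fun d hd => ?_
  rw [(Finsupp.weight_eq_zero_iff_eq_zero w).1 (Nat.lt_one_iff.1 hd),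
    coeff_zero_eq_constantCoeff_apply, hf]

theorem coeff_eq_of_smodEq {n : ℕ} {f g : MvPowerSeries σ R}
    (h : f ≡ g [SMOD weightedOrderIdeal w n]) {d : σ →₀ ℕ} (hd : Finsupp.weight w d < n) :
    coeff d f = coeff d g := by
  rw [← sub_eq_zero, ← map_sub]
  exact mem_weightedOrderIdeal_iff.1 (SModEq.sub_mem.1 h) d hd

theorem eq_of_forall_smodEq {f g : MvPowerSeries σ R}
    (h : ∀ n, f ≡ g [SMOD weightedOrderIdeal w n]) : f = g :=
  ext fun _ => coeff_eq_of_smodEq (h _) (Nat.lt_succ_self _)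

theorem _root_.SModEq.mul_left_of_mem_weightedOrderIdeal {k n : ℕ} {a f g : MvPowerSeries σ R}
    (ha : a ∈ weightedOrderIdeal w k) (h : f ≡ g [SMOD weightedOrderIdeal w n]) :
    a * f ≡ a * g [SMOD weightedOrderIdeal w (n + k)] := by
  rw [SModEq.sub_mem, ← mul_sub, add_comm]
  exact mul_mem_weightedOrderIdeal ha (SModEq.sub_mem.1 h)

theorem pderiv_mem_weightedOrderIdeal {n : ℕ} {f : MvPowerSeries σ R} (i : σ)
    (hf : f ∈ weightedOrderIdeal w n) : pderiv R i f ∈ weightedOrderIdeal w (n - w i) := by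
  classical
  refine mem_weightedOrderIdeal_iff.2 fun d hd => ?_
  rw [coeff_pderiv, mem_weightedOrderIdeal_iff.1 hf, zero_mul]
  rw [map_add, Finsupp.weight_single, smul_eq_mul, one_mul]
  omega

theorem smodEq_weightedOrderIdeal_zero (f g : MvPowerSeries σ R) :
    f ≡ g [SMOD weightedOrderIdeal w 0] :=
  SModEq.sub_mem.2 (mem_weightedOrderIdeal_iff.2 fun _ hd => absurd hd (Nat.not_lt_zero _))

theorem existsUnique_isFixedPt_of_contracting {ι : Type*}
    (Ψ : (ι → MvPowerSeries σ R) → ι → MvPowerSeries σ R)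
    (hΨ : ∀ n u v, (∀ i, u i ≡ v i [SMOD weightedOrderIdeal w n]) →
      ∀ i, Ψ u i ≡ Ψ v i [SMOD weightedOrderIdeal w (n + 1)]) :
    ∃! u, Function.IsFixedPt Ψ u := by
  set s : ℕ → ι → MvPowerSeries σ R := fun n => Ψ^[n] 0 with hs
  have step : ∀ n i, s (n + 1) i ≡ s n i [SMOD weightedOrderIdeal w n] := by
    intro n
    induction n with
    | zero => exact fun i => smodEq_weightedOrderIdeal_zero _ _
    | succ n ih =>
      intro i
      simpa only [hs, Function.iterate_succ_apply'] using hΨ n _ _ ih i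
  have cauchy : ∀ n k i, n ≤ k → s k i ≡ s n i [SMOD weightedOrderIdeal w n] := by
    intro n k i hnk
    induction k, hnk using Nat.le_induction with
    | base => rfl
    | succ k hnk ih => exact ((step k i).mono (weightedOrderIdeal_antitone hnk)).trans ih
  let L : ι → MvPowerSeries σ R := fun i d => coeff d (s (Finsupp.weight w d + 1) i)
  have hL : ∀ n i, L i ≡ s n i [SMOD weightedOrderIdeal w n] := by
    refine fun n i => SModEq.sub_mem.2 (mem_weightedOrderIdeal_iff.2 fun d hd => ?_)
    rw [map_sub, sub_eq_zero]
    exact (coeff_eq_of_smodEq (cauchy _ n i hd) (Nat.lt_succ_self _)).symm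
  have agree : ∀ u v, Function.IsFixedPt Ψ u → Function.IsFixedPt Ψ v →
      ∀ n i, u i ≡ v i [SMOD weightedOrderIdeal w n] := by
    intro u v hu hv n
    induction n with
    | zero => exact fun i => smodEq_weightedOrderIdeal_zero _ _
    | succ n ih => intro i; rw [← hu, ← hv]; exact hΨ n u v ih i
  have hLfix : Function.IsFixedPt Ψ L := funext fun i => eq_of_forall_smodEq (w := w) fun n => by
    have hΨs : Ψ (s n) i = s (n + 1) i := by simp only [hs, Function.iterate_succ_apply']
    refine SModEq.mono (weightedOrderIdeal_antitone (Nat.le_succ n)) ?_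
    exact (hΨ n L (s n) (hL n) i).trans (hΨs ▸ (hL (n + 1) i).symm)
  exact ⟨L, hLfix, fun v hv => funext fun i =>
    eq_of_forall_smodEq fun n => agree v L hv hLfix n i⟩

end WeightedOrderIdeal

section Subst

variable {σ τ R : Type*} [CommRing R]

theorem subst_smodEq_subst (w : τ → ℕ) {n : ℕ} {a b : σ → MvPowerSeries τ R}
    (ha : HasSubst a) (hb : HasSubst b) (hab : ∀ s, a s ≡ b s [SMOD weightedOrderIdeal w n])
    (f : MvPowerSeries σ R) : subst a f ≡ subst b f [SMOD weightedOrderIdeal w n] := by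
  refine SModEq.sub_mem.2 (mem_weightedOrderIdeal_iff.2 fun e he => ?_)
  rw [map_sub, sub_eq_zero, coeff_subst ha, coeff_subst hb]
  refine finsum_congr fun d => ?_
  have hprod : d.prod (fun s k => a s ^ k) ≡ d.prod (fun s k => b s ^ k)
      [SMOD weightedOrderIdeal w n] :=
    SModEq.prod fun s _ => (hab s).pow _
  rw [coeff_eq_of_smodEq hprod he]

theorem subst_sumElim_eq_of_coeff_eq_zero {ι : Type*} {y y' : ι → MvPowerSeries τ R}
    {z : σ → MvPowerSeries τ R} (ha : HasSubst (Sum.elim y z)) (ha' : HasSubst (Sum.elim y' z))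
    {ψ : MvPowerSeries (ι ⊕ σ) R}
    (hψ : ∀ d, (∃ j, d (Sum.inl j) ≠ 0) → coeff d ψ = 0) :
    subst (Sum.elim y z) ψ = subst (Sum.elim y' z) ψ := by
  ext e
  rw [coeff_subst ha, coeff_subst ha']
  refine finsum_congr fun d => ?_
  by_cases hd : ∃ j, d (Sum.inl j) ≠ 0
  · simp [hψ d hd]
  simp only [not_exists, not_not] at hd
  congr 2
  refine Finsupp.prod_congr fun s hs => ?_
  rcases s with j | t
  · exact absurd (hd j) (Finsupp.mem_support_iff.1 hs)
  · rfl

variable {ι : Type*} [LinearOrder ι]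

open Classical in
/-- Sorting each monomial of `φ` involving an `ι`-variable by the first such variable `k` and
dividing it by `X (inl k)` splits `φ = φ(0, ·) + ∑ k, X (inl k) * inlQuotient φ k`. -/
noncomputable def inlQuotient (φ : MvPowerSeries (ι ⊕ σ) R) (k : ι) :
    MvPowerSeries (ι ⊕ σ) R :=
  fun d => if ∀ j < k, d (Sum.inl j) = 0 then coeff (d + Finsupp.single (Sum.inl k) 1) φ else 0

open Classical in
theorem coeff_inlQuotient (φ : MvPowerSeries (ι ⊕ σ) R) (k : ι) (d : ι ⊕ σ →₀ ℕ) :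
    coeff d (inlQuotient φ k) =
      if ∀ j < k, d (Sum.inl j) = 0 then coeff (d + Finsupp.single (Sum.inl k) 1) φ else 0 :=
  rfl

theorem constantCoeff_inlQuotient (φ : MvPowerSeries (ι ⊕ σ) R) (k : ι) :
    constantCoeff (inlQuotient φ k) = coeff (Finsupp.single (Sum.inl k) 1) φ := by
  classical
  rw [← coeff_zero_eq_constantCoeff_apply, coeff_inlQuotient]
  simp

theorem coeff_sum_X_inl_mul_inlQuotient [Fintype ι] (φ : MvPowerSeries (ι ⊕ σ) R)
    {d : ι ⊕ σ →₀ ℕ} (hd : ∃ j, d (Sum.inl j) ≠ 0) :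
    coeff d (∑ k, X (Sum.inl k) * inlQuotient φ k) = coeff d φ := by
  classical
  obtain ⟨k₀, hk₀, hmin⟩ := WellFounded.has_min wellFounded_lt {j | d (Sum.inl j) ≠ 0} hd
  have hbelow : ∀ j < k₀, d (Sum.inl j) = 0 := fun j hj => by
    by_contra h
    exact hmin j h hj
  simp only [map_sum, X, coeff_monomial_mul, one_mul, Finsupp.single_le_iff, coeff_inlQuotient]
  rw [Finset.sum_eq_single k₀ _ (by simp)]
  · have hle : 1 ≤ d (Sum.inl k₀) := Nat.one_le_iff_ne_zero.2 hk₀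
    rw [if_pos hle, if_pos, tsub_add_cancel_of_le (Finsupp.single_le_iff.2 hle)]
    intro j hj
    rw [Finsupp.tsub_apply, hbelow j hj, zero_tsub]
  · intro k _ hk
    split_ifs with hle hfree
    · have hlt : k₀ < k := lt_of_le_of_ne (not_lt.1 fun h => hmin k (by simp; omega) h) hk.symm
      exact absurd (by simpa [hk.symm] using hfree k₀ hlt) hk₀
    all_goals rfl

theorem subst_sumElim_eq_add_sum [Fintype ι] (φ : MvPowerSeries (ι ⊕ σ) R)
    {y : ι → MvPowerSeries τ R} {z : σ → MvPowerSeries τ R}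
    (ha : HasSubst (Sum.elim y z)) (ha₀ : HasSubst (Sum.elim (0 : ι → MvPowerSeries τ R) z)) :
    subst (Sum.elim y z) φ =
      subst (Sum.elim (0 : ι → MvPowerSeries τ R) z) φ +
        ∑ k, y k * subst (Sum.elim y z) (inlQuotient φ k) := by
  set ψ := φ - ∑ k, X (Sum.inl k) * inlQuotient φ k
  have hψ : ∀ d, (∃ j, d (Sum.inl j) ≠ 0) → coeff d ψ = 0 := fun d hd => by
    rw [map_sub, coeff_sum_X_inl_mul_inlQuotient φ hd, sub_self]
  have expand : ∀ {a : ι ⊕ σ → MvPowerSeries τ R}, HasSubst a →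
      subst a φ = subst a ψ + ∑ k, a (Sum.inl k) * subst a (inlQuotient φ k) := fun ha => by
    rw [← coe_substAlgHom ha, ← sub_eq_iff_eq_add', ← map_sub, sub_sub_cancel, map_sum]
    simp only [map_mul, substAlgHom_X]
  rw [expand ha, expand ha₀, subst_sumElim_eq_of_coeff_eq_zero ha ha₀ hψ]
  simp

end Subst

end MvPowerSeries

open Matrix in
theorem Matrix.inv_mulVec_eq_iff {n α : Type*} [Fintype n] [DecidableEq n] [CommRing α]
    {A : Matrix n n α} (hA : IsUnit A) {u v : n → α} : A⁻¹ *ᵥ v = u ↔ A *ᵥ u = v := by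
  have hdet := A.isUnit_iff_isUnit_det.1 hA
  constructor <;> rintro rfl
  · rw [Matrix.mulVec_mulVec, Matrix.mul_nonsing_inv _ hdet, Matrix.one_mulVec]
  · rw [Matrix.mulVec_mulVec, Matrix.nonsing_inv_mul _ hdet, Matrix.one_mulVec]

open Matrix in
theorem SModEq.mulVec {l n R : Type*} [Fintype n] [CommRing R] {I : Ideal R}
    (A : Matrix l n R) {u v : n → R} (h : ∀ j, u j ≡ v j [SMOD I]) (i : l) :
    (A *ᵥ u) i ≡ (A *ᵥ v) i [SMOD I] := by
  show ∑ j, A i j * u j ≡ ∑ j, A i j * v j [SMOD I]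
  exact SModEq.sum fun j _ => SModEq.mul SModEq.rfl (h j)

namespace FormalSolution

local notation "𝔡" => (X 0 ^ 2 - X 1 : MvPowerSeries (Fin 2) ℂ)

local notation "𝓘" => weightedOrderIdeal (R := ℂ) (![1, 2] : Fin 2 → ℕ)

theorem X_zero_mem : (X 0 : MvPowerSeries (Fin 2) ℂ) ∈ 𝓘 1 :=
  X_mem_weightedOrderIdeal 0

theorem disc_mem : 𝔡 ∈ 𝓘 2 :=
  Ideal.sub_mem _
    (pow_two (X 0 : MvPowerSeries (Fin 2) ℂ) ▸ mul_mem_weightedOrderIdeal X_zero_mem X_zero_mem)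
    (X_mem_weightedOrderIdeal 1)

theorem disc_ne_zero : 𝔡 ≠ 0 := by
  intro h
  have := congrArg (coeff (Finsupp.single 1 1)) h
  simp [coeff_X_pow, coeff_X, Finsupp.single_eq_single_iff] at this

theorem weight_eq_add_two_mul (d : Fin 2 →₀ ℕ) :
    Finsupp.weight (![1, 2] : Fin 2 → ℕ) d = d 0 + 2 * d 1 := by
  simp [Finsupp.weight_eq_sum, Fin.sum_univ_two, mul_comm]

theorem embEps_sub_C_mem (g : PowerSeries ℂ) :
    embEps g - C (PowerSeries.constantCoeff g) ∈ 𝓘 2 := by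
  refine mem_weightedOrderIdeal_iff.2 fun d hd => ?_
  rw [weight_eq_add_two_mul] at hd
  change (if d 0 = 0 then PowerSeries.coeff (d 1) g else 0) - coeff d (C _) = 0
  rw [coeff_C]
  by_cases h0 : d 0 = 0
  · have : d = 0 := by ext i; fin_cases i <;> simp <;> omega
    simp [this]
  · have : d ≠ 0 := fun h => h0 (by simp [h])
    simp [h0, this]

theorem dX_eq_pderiv (F : MvPowerSeries (Fin 2) ℂ) : dX F = pderiv ℂ 0 F := by
  ext e
  change ((e 0 + 1 : ℕ) : ℂ) * coeff (e + Finsupp.single 0 1) F = _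
  rw [coeff_pderiv, mul_comm]
  push_cast
  rfl

theorem dX_disc_mul (F : MvPowerSeries (Fin 2) ℂ) :
    dX (𝔡 * F) = 2 * X 0 * F + 𝔡 * dX F := by
  simp only [dX_eq_pderiv, Derivation.leibniz, map_sub, Derivation.leibniz_pow, pderiv_X_self,
    pderiv_X_of_ne (show (1 : Fin 2) ≠ 0 by decide), smul_eq_mul]
  ring

variable {m : ℕ}

theorem hasSubst_sumElim {y : Fin m → MvPowerSeries (Fin 2) ℂ}
    (hy : ∀ i, constantCoeff (y i) = 0) :
    HasSubst (Sum.elim y X) :=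
  hasSubst_of_constantCoeff_zero fun s => by cases s <;> simp [hy]

theorem substY_eq_subst (f : MvPowerSeries (Fin m ⊕ Fin 2) ℂ)
    {y : Fin m → MvPowerSeries (Fin 2) ℂ} (hy : ∀ i, constantCoeff (y i) = 0) :
    substY m f y = subst (Sum.elim y X) f := by
  ext e
  rw [coeff_subst (hasSubst_sumElim hy)]
  refine finsum_congr fun d => ?_
  rw [smul_eq_mul, Finsupp.prod_fintype _ _ (fun _ => pow_zero _), Fintype.prod_sum_type,
    Fin.prod_univ_two, mul_comm (∏ _, _)]
  rfl

theorem constantCoeff_disc_mul (u : MvPowerSeries (Fin 2) ℂ) : constantCoeff (𝔡 * u) = 0 := by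
  simp

noncomputable def nonlinearQuotient (f : MvPowerSeries (Fin m ⊕ Fin 2) ℂ)
    (u : Fin m → MvPowerSeries (Fin 2) ℂ) : MvPowerSeries (Fin 2) ℂ :=
  ∑ k, u k * subst (Sum.elim (fun j => 𝔡 * u j) X) (inlQuotient f k)

theorem substY_disc_mul (f : MvPowerSeries (Fin m ⊕ Fin 2) ℂ)
    (u : Fin m → MvPowerSeries (Fin 2) ℂ) :
    substY m f (fun j => 𝔡 * u j) = substY m f (fun _ => 0) + 𝔡 * nonlinearQuotient f u := by
  rw [substY_eq_subst f fun j => constantCoeff_disc_mul (u j),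
    substY_eq_subst f fun _ => map_zero _,
    subst_sumElim_eq_add_sum f (hasSubst_sumElim fun j => constantCoeff_disc_mul (u j))
      (hasSubst_sumElim fun _ => map_zero _), nonlinearQuotient, Finset.mul_sum]
  simp only [mul_assoc]
  rfl

theorem nonlinearQuotient_smodEq {f : MvPowerSeries (Fin m ⊕ Fin 2) ℂ}
    (hf : ∀ k, coeff (Finsupp.single (Sum.inl k) 1) f = 0) {n : ℕ}
    {u v : Fin m → MvPowerSeries (Fin 2) ℂ} (huv : ∀ j, u j ≡ v j [SMOD 𝓘 n]) :
    nonlinearQuotient f u ≡ nonlinearQuotient f v [SMOD 𝓘 (n + 1)] := by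
  refine SModEq.sum fun k _ => ?_
  have hu := hasSubst_sumElim fun j => constantCoeff_disc_mul (u j)
  have hv := hasSubst_sumElim fun j => constantCoeff_disc_mul (v j)
  have hmem : subst (Sum.elim (fun j => 𝔡 * u j) X) (inlQuotient f k) ∈ 𝓘 1 :=
    mem_weightedOrderIdeal_one_of_constantCoeff (by decide) <|
      constantCoeff_subst_eq_zero hu (fun s => by cases s <;> simp)
        (by rw [constantCoeff_inlQuotient, hf])
  have hsubst : subst (Sum.elim (fun j => 𝔡 * u j) X) (inlQuotient f k) ≡
      subst (Sum.elim (fun j => 𝔡 * v j) X) (inlQuotient f k) [SMOD 𝓘 (n + 1)] := by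
    refine subst_smodEq_subst _ hu hv (fun s => ?_) _
    rcases s with j | s
    · exact ((huv j).mul_left_of_mem_weightedOrderIdeal disc_mem).mono
        (weightedOrderIdeal_antitone (by omega))
    · rfl
  calc u k * _
      ≡ v k * subst (Sum.elim (fun j => 𝔡 * u j) X) (inlQuotient f k) [SMOD 𝓘 (n + 1)] := by
        simpa only [mul_comm _ (subst _ _)] using (huv k).mul_left_of_mem_weightedOrderIdeal hmem
    _ ≡ _ [SMOD 𝓘 (n + 1)] := SModEq.mul SModEq.rfl hsubst

/-- After division by `𝔡`, the system reads `M(0) u = reducedRHS M q f u`. -/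
noncomputable def reducedRHS (M : Fin m → Fin m → PowerSeries ℂ)
    (q : Fin m → MvPowerSeries (Fin 2) ℂ) (f : Fin m → MvPowerSeries (Fin m ⊕ Fin 2) ℂ)
    (u : Fin m → MvPowerSeries (Fin 2) ℂ) (i : Fin m) : MvPowerSeries (Fin 2) ℂ :=
  2 * X 0 * u i + 𝔡 * dX (u i) -
    ∑ j, (embEps (M i j) - C (PowerSeries.constantCoeff (M i j))) * u j - q i -
    nonlinearQuotient (f i) u

theorem reducedRHS_smodEq (M : Fin m → Fin m → PowerSeries ℂ)
    (q : Fin m → MvPowerSeries (Fin 2) ℂ) {f : Fin m → MvPowerSeries (Fin m ⊕ Fin 2) ℂ}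
    (hf : ∀ i k, coeff (Finsupp.single (Sum.inl k) 1) (f i) = 0) {n : ℕ}
    {u v : Fin m → MvPowerSeries (Fin 2) ℂ} (huv : ∀ j, u j ≡ v j [SMOD 𝓘 n])
    (i : Fin m) : reducedRHS M q f u i ≡ reducedRHS M q f v i [SMOD 𝓘 (n + 1)] := by
  have hx : 2 * X 0 * u i ≡ 2 * X 0 * v i [SMOD 𝓘 (n + 1)] :=
    (huv i).mul_left_of_mem_weightedOrderIdeal (Ideal.mul_mem_left _ _ X_zero_mem)
  have hdX : dX (u i) ≡ dX (v i) [SMOD 𝓘 (n - 1)] := by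
    rw [SModEq.sub_mem, dX_eq_pderiv, dX_eq_pderiv, ← map_sub]
    exact pderiv_mem_weightedOrderIdeal 0 (SModEq.sub_mem.1 (huv i))
  have hlin : ∀ j, (embEps (M i j) - C (PowerSeries.constantCoeff (M i j))) * u j ≡
      (embEps (M i j) - C (PowerSeries.constantCoeff (M i j))) * v j [SMOD 𝓘 (n + 1)] := fun j =>
    ((huv j).mul_left_of_mem_weightedOrderIdeal (embEps_sub_C_mem _)).mono
      (weightedOrderIdeal_antitone (by omega))
  refine SModEq.sub (SModEq.sub (SModEq.sub (hx.add ?_) (SModEq.sum fun j _ => hlin j)) SModEq.rfl)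
    (nonlinearQuotient_smodEq (hf i) huv)
  exact (hdX.mul_left_of_mem_weightedOrderIdeal disc_mem).mono
    (weightedOrderIdeal_antitone (by omega))

open Matrix in
theorem equation_iff_mulVec_eq_reducedRHS (M : Fin m → Fin m → PowerSeries ℂ)
    {q : Fin m → MvPowerSeries (Fin 2) ℂ} {f : Fin m → MvPowerSeries (Fin m ⊕ Fin 2) ℂ}
    (hq : ∀ i, substY m (f i) (fun _ => 0) = 𝔡 * q i)
    (u : Fin m → MvPowerSeries (Fin 2) ℂ) :
    (∀ i, 𝔡 * dX (𝔡 * u i) =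
        (∑ j, embEps (M i j) * (𝔡 * u j)) + substY m (f i) (fun j => 𝔡 * u j)) ↔
      (Matrix.of fun i j => C (PowerSeries.constantCoeff (M i j))) *ᵥ u = reducedRHS M q f u := by
  rw [funext_iff]
  refine forall_congr' fun i => ?_
  have hfactor : (∑ j, embEps (M i j) * (𝔡 * u j)) + substY m (f i) (fun j => 𝔡 * u j) =
      𝔡 * ((∑ j, embEps (M i j) * u j) + q i + nonlinearQuotient (f i) u) := by
    rw [substY_disc_mul, hq, mul_add, mul_add, Finset.mul_sum]
    simp only [mul_left_comm _ 𝔡]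
    ring
  rw [hfactor, dX_disc_mul, mul_right_inj' disc_ne_zero]
  simp only [reducedRHS, mulVec, dotProduct, of_apply, sub_mul, Finset.sum_sub_distrib]
  constructor <;> intro h <;> linear_combination -h

end FormalSolution

open FormalSolution in
/-- Proposition 2.2 of the paper. The singular system
`(x²−ε)·dy/dx = M(ε)y + f(x,y,ε)`, with `M(0)` invertible,
`f(x,0,ε)` divisible by `x²−ε`, and the coefficients of the monomials of degree `1` in
`y` having zero constant term, possesses a unique formal power series solution of the
form `ŷ(x,ε) = (x²−ε)·u(x,ε)`, `u ∈ ℂ[[x,ε]]^m`. -/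
theorem formal_solution_exists_unique
    (m : ℕ)
    (M : Fin m → Fin m → PowerSeries ℂ)
    (hM : IsUnit (Matrix.of fun i j => PowerSeries.constantCoeff (M i j)))
    (f : Fin m → MvPowerSeries (Fin m ⊕ Fin 2) ℂ)
    -- (i) the part of f of degree 0 in y is divisible by x² − ε
    (hf0 : ∀ i, ∃ q : MvPowerSeries (Fin 2) ℂ,
      substY m (f i) (fun _ => 0) =
        (MvPowerSeries.X (0 : Fin 2) ^ 2 - MvPowerSeries.X 1) * q)
    -- (ii) the coefficient of each monomial of degree 1 in y has zero constant term
    (hf1 : ∀ i, ∀ k : Fin m,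
      MvPowerSeries.coeff (Finsupp.single (Sum.inl k : Fin m ⊕ Fin 2) 1) (f i) = 0) :
    ∃! u : Fin m → MvPowerSeries (Fin 2) ℂ,
      ∀ i,
        (MvPowerSeries.X (0 : Fin 2) ^ 2 - MvPowerSeries.X 1) *
            dX ((MvPowerSeries.X (0 : Fin 2) ^ 2 - MvPowerSeries.X 1) * u i) =
          (∑ j, embEps (M i j) *
            ((MvPowerSeries.X (0 : Fin 2) ^ 2 - MvPowerSeries.X 1) * u j)) +
            substY m (f i)
              (fun j => (MvPowerSeries.X (0 : Fin 2) ^ 2 - MvPowerSeries.X 1) * u j) := by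
  choose q hq using hf0
  have hA : IsUnit (Matrix.of fun i j => C (PowerSeries.constantCoeff (M i j)) :
      Matrix (Fin m) (Fin m) (MvPowerSeries (Fin 2) ℂ)) :=
    hM.map (RingHom.mapMatrix C)
  refine (existsUnique_congr fun u =>
    (equation_iff_mulVec_eq_reducedRHS M hq u).trans (Matrix.inv_mulVec_eq_iff hA).symm).2 ?_
  exact existsUnique_isFixedPt_of_contracting (w := ![1, 2]) _ fun _ _ _ huv =>
    SModEq.mulVec _ (reducedRHS_smodEq M q hf1 huv)
end

section
/- Let Ω ⊆ ℂ be open, ε ∈ ℂ, and let Λ, R, U, T_D : Ω → M_n(ℂ) be holomorphic matrix-valued functions such that Λ(x) and T_D(x) are diagonal for every x ∈ Ω, U solves the matrix Riccati system (x²−ε)·U′(x) = Λ(x)U(x) − U(x)Λ(x) + (x²−ε)·( R(x)(I+U(x)) − (I+U(x))D(x) ), where D(x) denotes the diagonal part of R(x)(I+U(x)), and T_D solves T_D′(x) = D(x)·T_D(x). Then the matrix function T := (I+U)·T_D solves the linear equation (x²−ε)·T′(x) = A(x)·T(x) − T(x)·Λ(x), where A(x) := Λ(x) + (x²−ε)·R(x).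 (This is the reduction by which the normalization equation for a non-resonant linear system unfolding an irregular singularity of Poincaré rank 1 is reduced to a system of n(n−1) Riccati equations.) -/
open Complex Matrix

theorem Matrix.IsDiag.commute {n α : Type*} [Fintype n] [DecidableEq n]
    [NonUnitalNonAssocCommSemiring α] {A B : Matrix n n α} (hA : A.IsDiag) (hB : B.IsDiag) :
    Commute A B := by
  rw [← hA.diagonal_diag, ← hB.diagonal_diag]
  exact commute_diagonal _ _

theorem Matrix.hasDerivAt_mul_apply {𝕜 l m p : Type*} [NontriviallyNormedField 𝕜] [Fintype m]
    {A : 𝕜 → Matrix l m 𝕜} {B : 𝕜 → Matrix m p 𝕜} {A' : Matrix l m 𝕜} {B' : Matrix m p 𝕜}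
    {x : 𝕜} (hA : ∀ i j, HasDerivAt (fun z => A z i j) (A' i j) x)
    (hB : ∀ i j, HasDerivAt (fun z => B z i j) (B' i j) x) (i : l) (k : p) :
    HasDerivAt (fun z => (A z * B z) i k) ((A' * B x + A x * B') i k) x := by
  simp only [Matrix.mul_apply, Matrix.add_apply, ← Finset.sum_add_distrib]
  exact HasDerivAt.fun_sum fun j _ => (hA i j).mul (hB j k)

/-- Multiplying the Riccati equation on the right by `T_D`: since `Λ` commutes with `T_D`,
`(Λ U - U Λ) T_D = Λ T - T Λ` for `T = (1 + U) T_D`, and the `(1 + U) D T_D` term is exactly the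
second half of the product rule for `T'`. -/
theorem smul_product_deriv_eq_of_riccati {K A : Type*} [CommRing K] [Ring A] [Algebra K A]
    {c : K} {Λ R U U' TD D : A} (hcomm : Commute Λ TD)
    (hRic : c • U' = Λ * U - U * Λ + c • (R * (1 + U) - (1 + U) * D)) :
    c • (U' * TD + (1 + U) * (D * TD)) =
      (Λ + c • R) * ((1 + U) * TD) - (1 + U) * TD * Λ := by
  rw [smul_add, ← smul_mul_assoc, hRic, mul_assoc (1 + U), ← hcomm.eq]
  simp only [add_mul, sub_mul, mul_add, one_mul, mul_one, smul_mul_assoc,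
    smul_sub, smul_add, mul_assoc]
  abel

theorem riccati_reduction_of_normalization_general
    (n : ℕ) (Ω : Set ℂ) (ε : ℂ)
    (Λ R U U' TD : ℂ → Matrix (Fin n) (Fin n) ℂ)
    -- Λ(x) and T_D(x) are diagonal
    (hΛdiag : ∀ x ∈ Ω, ∀ i j, i ≠ j → Λ x i j = 0)
    (hTDdiag : ∀ x ∈ Ω, ∀ i j, i ≠ j → TD x i j = 0)
    -- U' is the derivative of U on Ω
    (hU' : ∀ x ∈ Ω, ∀ i j, HasDerivAt (fun z => U z i j) (U' x i j) x)
    -- U solves the Riccati system, where D is the diagonal part of R (I + U)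
    (hRic : ∀ x ∈ Ω,
      (x ^ 2 - ε) • U' x =
        Λ x * U x - U x * Λ x +
          (x ^ 2 - ε) •
            (R x * (1 + U x) -
              (1 + U x) * Matrix.diagonal (fun i => (R x * (1 + U x)) i i)))
    -- T_D solves T_D' = D · T_D
    (hTD' : ∀ x ∈ Ω, ∀ i j,
      HasDerivAt (fun z => TD z i j)
        ((Matrix.diagonal (fun k => (R x * (1 + U x)) k k) * TD x) i j) x) :
    ∀ x ∈ Ω, ∃ T' : Matrix (Fin n) (Fin n) ℂ,
      (∀ i j, HasDerivAt (fun z => ((1 + U z) * TD z) i j) (T' i j) x) ∧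
      (x ^ 2 - ε) • T' =
        (Λ x + (x ^ 2 - ε) • R x) * ((1 + U x) * TD x) -
          ((1 + U x) * TD x) * Λ x := by
  intro x hx
  have hOneAddU : ∀ i j, HasDerivAt (fun z => (1 + U z) i j) (U' x i j) x := fun i j => by
    simpa only [Matrix.add_apply] using (hU' x hx i j).const_add _
  have hcomm : Commute (Λ x) (TD x) :=
    Matrix.IsDiag.commute (hΛdiag x hx) (hTDdiag x hx)
  exact ⟨_, Matrix.hasDerivAt_mul_apply hOneAddU (hTD' x hx),
    smul_product_deriv_eq_of_riccati hcomm (hRic x hx)⟩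

/-- Reduction of the normalization equation for a non-resonant linear
system unfolding an irregular singularity of Poincaré rank 1 to a system of Riccati
equations: if `U` solves the matrix Riccati system and `T_D` solves `T_D' = D T_D`,
then `T = (I + U) T_D` solves `(x² − ε) T' = A T − T Λ` with `A = Λ + (x² − ε) R`. -/
theorem riccati_reduction_of_normalization
    (n : ℕ) (Ω : Set ℂ) (hΩ : IsOpen Ω) (ε : ℂ)
    (Λ R U U' TD : ℂ → Matrix (Fin n) (Fin n) ℂ)
    -- holomorphy of all data, entrywise
    (hΛhol : ∀ i j, DifferentiableOn ℂ (fun z => Λ z i j) Ω)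
    (hRhol : ∀ i j, DifferentiableOn ℂ (fun z => R z i j) Ω)
    (hUhol : ∀ i j, DifferentiableOn ℂ (fun z => U z i j) Ω)
    (hTDhol : ∀ i j, DifferentiableOn ℂ (fun z => TD z i j) Ω)
    -- Λ(x) and T_D(x) are diagonal
    (hΛdiag : ∀ x ∈ Ω, ∀ i j, i ≠ j → Λ x i j = 0)
    (hTDdiag : ∀ x ∈ Ω, ∀ i j, i ≠ j → TD x i j = 0)
    -- U' is the derivative of U on Ω
    (hU' : ∀ x ∈ Ω, ∀ i j, HasDerivAt (fun z => U z i j) (U' x i j) x)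
    -- U solves the Riccati system, where D is the diagonal part of R (I + U)
    (hRic : ∀ x ∈ Ω,
      (x ^ 2 - ε) • U' x =
        Λ x * U x - U x * Λ x +
          (x ^ 2 - ε) •
            (R x * (1 + U x) -
              (1 + U x) * Matrix.diagonal (fun i => (R x * (1 + U x)) i i)))
    -- T_D solves T_D' = D · T_D
    (hTD' : ∀ x ∈ Ω, ∀ i j,
      HasDerivAt (fun z => TD z i j)
        ((Matrix.diagonal (fun k => (R x * (1 + U x)) k k) * TD x) i j) x) :
    ∀ x ∈ Ω, ∃ T' : Matrix (Fin n) (Fin n) ℂ,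
      (∀ i j, HasDerivAt (fun z => ((1 + U z) * TD z) i j) (T' i j) x) ∧
      (x ^ 2 - ε) • T' =
        (Λ x + (x ^ 2 - ε) • R x) * ((1 + U x) * TD x) -
          ((1 + U x) * TD x) * Λ x :=
  riccati_reduction_of_normalization_general n Ω ε Λ R U U' TD hΛdiag hTDdiag hU' hRic hTD'
end

section
/- Let α ∈ ℝ, let A, B ∈ ℂ with Re(e^{iα}A) < Re(e^{iα}B), and let φ be a measurable function on e^{iα}ℝ with |φ|_α^{A,B} < +∞. Then for every t in the open strip T_α^{A,B} the Laplace integral L_α[φ](t) converges absolutely, L_α[φ] is holomorphic on T_α^{A,B}, and for all A₁, B₁ with Re(e^{iα}A) < Re(e^{iα}A₁) ≤ Re(e^{iα}B₁) < Re(e^{iα}B), L_α[φ](t) → 0 as |t| → ∞ uniformly for t in the closed substrip T̄_α^{A₁,B₁}. -/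
/-!
Substituting `w = e^{iα} t` gives `L_α[φ](t) = e^{iα} F(e^{iα} t)`, where
`F(w) = ∫ f(s) e^{-ws} ds` is the ordinary two-sided Laplace transform of `f(s) = φ(e^{iα}s)`, and
the hypothesis says `|f(s)| ≤ M min(e^{as}, e^{bs})` with `a = Re(e^{iα}A)`, `b = Re(e^{iα}B)`.
If `a + ε ≤ Re w ≤ b - ε`, the integrand of `F` and its `w`-derivative are dominated by
`M e^{-ε|s|}` and `M |s| e^{-ε|s|}`; this gives absolute convergence, holomorphy by
differentiation under the integral, and a bound on `F'` making `x ↦ F(x + iy)` Lipschitz on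
`[a₁, b₁]` uniformly in `y`. On each vertical line `y ↦ F(x + iy)` is a Fourier transform, so it
tends to `0` by Riemann–Lebesgue; equicontinuity upgrades this to uniform convergence on the
compact interval `[a₁, b₁]` (Arzelà–Ascoli).
-/

open Complex MeasureTheory

/-- The weight `|e^{−A e^{iα}s}| + |e^{−B e^{iα}s}|`. -/
noncomputable def BLweight (α : ℝ) (A B : ℂ) (s : ℝ) : ℝ :=
  ‖Complex.exp (-A * (Complex.exp (α * Complex.I) * s))‖ +
    ‖Complex.exp (-B * (Complex.exp (α * Complex.I) * s))‖

/-- The two-sided Laplace transform in direction `α`. -/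
noncomputable def LaplaceDir (α : ℝ) (φ : ℂ → ℂ) (t : ℂ) : ℂ :=
  Complex.exp (α * Complex.I) *
    ∫ s : ℝ, φ (Complex.exp (α * Complex.I) * s) *
      Complex.exp (-t * (Complex.exp (α * Complex.I) * s))

/-- The open strip `T_α^{A,B}`. -/
def openStrip (α : ℝ) (A B : ℂ) : Set ℂ :=
  {t : ℂ | (Complex.exp (α * Complex.I) * A).re < (Complex.exp (α * Complex.I) * t).re ∧
    (Complex.exp (α * Complex.I) * t).re < (Complex.exp (α * Complex.I) * B).re}

/-- The closed strip `T̄_α^{A,B}`. -/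
def closedStrip (α : ℝ) (A B : ℂ) : Set ℂ :=
  {t : ℂ | (Complex.exp (α * Complex.I) * A).re ≤ (Complex.exp (α * Complex.I) * t).re ∧
    (Complex.exp (α * Complex.I) * t).re ≤ (Complex.exp (α * Complex.I) * B).re}

open Filter Topology Set

theorem EquicontinuousOn.tendstoUniformlyOn_of_tendsto {ι X α : Type*} [TopologicalSpace X]
    [UniformSpace α] {F : ι → X → α} {f : X → α} {K : Set X} {l : Filter ι}
    (hK : IsCompact K) (hF : EquicontinuousOn F K)
    (h : ∀ x ∈ K, Tendsto (F · x) l (𝓝 (f x))) : TendstoUniformlyOn F f l K := by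
  have : CompactSpace K := isCompact_iff_compactSpace.mp hK
  rw [tendstoUniformlyOn_iff_tendstoUniformly_comp_coe]
  refine UniformFun.tendsto_iff_tendstoUniformly.mp <|
    ((equicontinuous_restrict_iff _).mpr hF).tendsto_uniformFun_iff_pi _ _ |>.mpr ?_
  exact tendsto_pi_nhds.mpr fun x => h x x.2

lemma exists_pos_add_le_and_le_sub {a b x y : ℝ} (ha : a < x) (hb : y < b) :
    ∃ ε > 0, a + ε ≤ x ∧ y ≤ b - ε :=
  ⟨min (x - a) (b - y), lt_min (sub_pos.2 ha) (sub_pos.2 hb),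
    by linarith [min_le_left (x - a) (b - y)], by linarith [min_le_right (x - a) (b - y)]⟩

namespace Real

lemma exp_neg_mul_le_exp_neg_mul_abs_mul_add {a b x ε : ℝ} (ha : a + ε ≤ x) (hb : x ≤ b - ε)
    (s : ℝ) : exp (-x * s) ≤ exp (-ε * |s|) * (exp (-a * s) + exp (-b * s)) := by
  rcases le_total 0 s with hs | hs
  · calc exp (-x * s) ≤ exp (-ε * |s| + -a * s) := by
          rw [abs_of_nonneg hs]; gcongr; nlinarith
      _ ≤ exp (-ε * |s|) * (exp (-a * s) + exp (-b * s)) := by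
          rw [exp_add]; gcongr; exact le_add_of_nonneg_right (exp_pos _).le
  · calc exp (-x * s) ≤ exp (-ε * |s| + -b * s) := by
          rw [abs_of_nonpos hs]; gcongr; nlinarith
      _ ≤ exp (-ε * |s|) * (exp (-a * s) + exp (-b * s)) := by
          rw [exp_add]; gcongr; exact le_add_of_nonneg_left (exp_pos _).le

lemma abs_mul_exp_neg_mul_abs_le {c : ℝ} (hc : 0 < c) (s : ℝ) :
    |s| * exp (-c * |s|) ≤ 2 / c * exp (-(c / 2) * |s|) := by
  have hlin : c / 2 * |s| ≤ exp (c / 2 * |s|) := by linarith [add_one_le_exp (c / 2 * |s|)]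
  calc |s| * exp (-c * |s|) = 2 / c * (c / 2 * |s|) * exp (-c * |s|) := by field_simp
    _ ≤ 2 / c * exp (c / 2 * |s|) * exp (-c * |s|) := by gcongr
    _ = 2 / c * exp (-(c / 2) * |s|) := by rw [mul_assoc, ← exp_add]; ring_nf

lemma integrable_exp_neg_mul_abs {c : ℝ} (hc : 0 < c) :
    Integrable fun s : ℝ => exp (-c * |s|) := by
  have hg : Integrable ((Ici 0).indicator fun s : ℝ => exp (-c * s)) :=
    (integrable_indicator_iff measurableSet_Ici).2
      ((integrableOn_Ici_iff_integrableOn_Ioi (by simp)).2 (exp_neg_integrableOn_Ioi 0 hc))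
  have hg_nonneg : ∀ s, 0 ≤ (Ici 0).indicator (fun s : ℝ => exp (-c * s)) s :=
    indicator_nonneg fun _ _ => (exp_pos _).le
  -- `e^{-c|s|} ≤ g(s) + g(-s)` for `g = 1_{[0,∞)} e^{-c·}`
  refine (hg.add hg.comp_neg).mono' (by fun_prop) (ae_of_all _ fun s => ?_)
  rw [norm_of_nonneg (exp_pos _).le, Pi.add_apply]
  rcases le_total 0 s with hs | hs
  · have : exp (-c * |s|) = (Ici 0).indicator (fun s : ℝ => exp (-c * s)) s := by
      simp [hs, abs_of_nonneg hs]
    exact this ▸ le_add_of_nonneg_right (hg_nonneg _)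
  · have : exp (-c * |s|) = (Ici 0).indicator (fun s : ℝ => exp (-c * s)) (-s) := by
      simp [hs, abs_of_nonpos hs]
    exact this ▸ le_add_of_nonneg_left (hg_nonneg _)

lemma integrable_abs_mul_exp_neg_mul_abs {c : ℝ} (hc : 0 < c) :
    Integrable fun s : ℝ => |s| * exp (-c * |s|) :=
  ((integrable_exp_neg_mul_abs (half_pos hc)).const_mul (2 / c)).mono' (by fun_prop)
    (ae_of_all _ fun s => by
      rw [norm_of_nonneg (by positivity)]; exact abs_mul_exp_neg_mul_abs_le hc s)

end Real

lemma norm_cexp_neg_mul_ofReal (w : ℂ) (s : ℝ) : ‖cexp (-w * s)‖ = Real.exp (-w.re * s) := by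
  simp [Complex.norm_exp]

noncomputable def twoSidedLaplace (f : ℝ → ℂ) (w : ℂ) : ℂ :=
  ∫ s : ℝ, f s * cexp (-w * s)

/-- Riemann–Lebesgue; no integrability is needed, since for non-integrable `f` both the Fourier
integral and the Laplace integral take the junk value `0`. -/
lemma tendsto_twoSidedLaplace_ofReal_add_mul_I (f : ℝ → ℂ) (x : ℝ) :
    Tendsto (fun y : ℝ => twoSidedLaplace f (x + y * I)) (cocompact ℝ) (𝓝 0) := by
  have hscale := tendsto_cocompact_mul_right₀ (inv_ne_zero Real.two_pi_pos.ne')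
  convert (Real.zero_at_infty_fourier fun s => f s * cexp (-x * s)).comp hscale using 1
  funext y
  simp only [Function.comp_apply, Real.fourier_real_eq_integral_exp_smul, twoSidedLaplace,
    smul_eq_mul]
  congr 1 with s
  rw [mul_left_comm, ← Complex.exp_add]
  congr 2
  push_cast
  field_simp
  ring

section StripBounds

variable {f : ℝ → ℂ} {a b M : ℝ}
  (hf : ∀ s, ‖f s‖ * (Real.exp (-a * s) + Real.exp (-b * s)) ≤ M)
include hf

lemma norm_mul_cexp_neg_mul_le {ε : ℝ} {w : ℂ} (ha : a + ε ≤ w.re) (hb : w.re ≤ b - ε)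
    (s : ℝ) :
    ‖f s * cexp (-w * s)‖ ≤ M * Real.exp (-ε * |s|) := by
  rw [norm_mul, norm_cexp_neg_mul_ofReal]
  calc ‖f s‖ * Real.exp (-w.re * s)
      ≤ ‖f s‖ * (Real.exp (-ε * |s|) * (Real.exp (-a * s) + Real.exp (-b * s))) := by
        gcongr; exact Real.exp_neg_mul_le_exp_neg_mul_abs_mul_add ha hb s
    _ = Real.exp (-ε * |s|) * (‖f s‖ * (Real.exp (-a * s) + Real.exp (-b * s))) := by ring
    _ ≤ M * Real.exp (-ε * |s|) := by rw [mul_comm M]; gcongr; exact hf s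

lemma norm_ofReal_mul_mul_cexp_neg_mul_le {ε : ℝ} {w : ℂ} (ha : a + ε ≤ w.re)
    (hb : w.re ≤ b - ε) (s : ℝ) :
    ‖(s : ℂ) * f s * cexp (-w * s)‖ ≤ M * (|s| * Real.exp (-ε * |s|)) := by
  rw [mul_assoc, norm_mul, norm_real, Real.norm_eq_abs, mul_left_comm]
  gcongr
  exact norm_mul_cexp_neg_mul_le hf ha hb s

lemma norm_twoSidedLaplace_ofReal_mul_le {ε : ℝ} (hε : 0 < ε) {w : ℂ} (ha : a + ε ≤ w.re)
    (hb : w.re ≤ b - ε) :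
    ‖twoSidedLaplace (fun s => s * f s) w‖ ≤ M * ∫ s : ℝ, |s| * Real.exp (-ε * |s|) := by
  rw [← integral_const_mul]
  exact norm_integral_le_of_norm_le ((Real.integrable_abs_mul_exp_neg_mul_abs hε).const_mul M)
    (ae_of_all _ (norm_ofReal_mul_mul_cexp_neg_mul_le hf ha hb))

variable (hmeas : AEStronglyMeasurable f)
include hmeas

lemma integrable_mul_cexp_neg_mul {w : ℂ} (ha : a < w.re) (hb : w.re < b) :
    Integrable fun s : ℝ => f s * cexp (-w * s) := by
  obtain ⟨ε, hε, haε, hbε⟩ := exists_pos_add_le_and_le_sub ha hb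
  exact ((Real.integrable_exp_neg_mul_abs hε).const_mul M).mono' (hmeas.mul (by fun_prop))
    (ae_of_all _ (norm_mul_cexp_neg_mul_le hf haε hbε))

theorem hasDerivAt_twoSidedLaplace {w₀ : ℂ} (ha : a < w₀.re) (hb : w₀.re < b) :
    HasDerivAt (twoSidedLaplace f) (-twoSidedLaplace (fun s => s * f s) w₀) w₀ := by
  obtain ⟨ε, hε, haε, hbε⟩ := exists_pos_add_le_and_le_sub ha hb
  have hball : ∀ w ∈ Metric.ball w₀ (ε / 2), a + ε / 2 ≤ w.re ∧ w.re ≤ b - ε / 2 := by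
    intro w hw
    have := (abs_re_le_norm (w - w₀)).trans (mem_ball_iff_norm.1 hw).le
    rw [sub_re, abs_le] at this
    constructor <;> linarith [this.1, this.2]
  have hderiv := hasDerivAt_integral_of_dominated_loc_of_deriv_le
    (F := fun w s => f s * cexp (-w * s)) (F' := fun w s => -((s : ℂ) * f s * cexp (-w * s)))
    (Metric.ball_mem_nhds w₀ (half_pos hε))
    (Eventually.of_forall fun w => hmeas.mul (by fun_prop))
    (integrable_mul_cexp_neg_mul hf hmeas ha hb)
    ((((by fun_prop : Continuous fun s : ℝ => (s : ℂ)).aestronglyMeasurable.mul hmeas).mul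
      (by fun_prop)).neg)
    (ae_of_all _ fun s w hw => by
      rw [norm_neg]
      exact norm_ofReal_mul_mul_cexp_neg_mul_le hf (hball w hw).1 (hball w hw).2 s)
    ((Real.integrable_abs_mul_exp_neg_mul_abs (half_pos hε)).const_mul M)
    (ae_of_all _ fun s w _ => by
      have hlin : HasDerivAt (fun w : ℂ => -w * s) (-s) w := by
        simpa using (hasDerivAt_id w).neg.mul_const (s : ℂ)
      exact (hlin.cexp.const_mul (f s)).congr_deriv (by ring))
  rw [twoSidedLaplace, ← integral_neg]
  exact hderiv.2

lemma lipschitzOnWith_twoSidedLaplace_ofReal_add_mul_I {ε : ℝ} (hε : 0 < ε) (y : ℝ) :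
    LipschitzOnWith (M * ∫ s : ℝ, |s| * Real.exp (-ε * |s|)).toNNReal
      (fun x : ℝ => twoSidedLaplace f (x + y * I)) (Icc (a + ε) (b - ε)) := by
  refine (convex_Icc _ _).lipschitzOnWith_of_nnnorm_hasDerivWithin_le
    (f' := fun x : ℝ => -twoSidedLaplace (fun s => s * f s) (x + y * I)) (fun x hx => ?_)
    (fun x hx => ?_)
  · have hx' : a < (↑x + ↑y * I).re ∧ (↑x + ↑y * I).re < b := by
      simp only [add_re, ofReal_re, mul_re, I_re, I_im, ofReal_im]
      constructor <;> linarith [hx.1, hx.2]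
    exact ((hasDerivAt_twoSidedLaplace hf hmeas hx'.1 hx'.2).comp_add_const _ _).comp_ofReal
      |>.hasDerivWithinAt
  · rw [nnnorm_neg, ← norm_toNNReal]
    refine Real.toNNReal_le_toNNReal (norm_twoSidedLaplace_ofReal_mul_le hf hε ?_ ?_) <;>
      simp [hx.1, hx.2]

theorem exists_norm_twoSidedLaplace_le {a₁ b₁ : ℝ} (ha₁ : a < a₁) (hb₁ : b₁ < b) {δ : ℝ}
    (hδ : 0 < δ) :
    ∃ ρ, ∀ w : ℂ, a₁ ≤ w.re → w.re ≤ b₁ → ρ ≤ ‖w‖ → ‖twoSidedLaplace f w‖ ≤ δ := by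
  obtain ⟨ε, hε, haε, hbε⟩ := exists_pos_add_le_and_le_sub ha₁ hb₁
  have hunif : TendstoUniformlyOn (fun (y x : ℝ) => twoSidedLaplace f (x + y * I)) 0
      (cocompact ℝ) (Icc a₁ b₁) :=
    EquicontinuousOn.tendstoUniformlyOn_of_tendsto isCompact_Icc
      (LipschitzOnWith.uniformEquicontinuousOn _ _ fun y =>
        (lipschitzOnWith_twoSidedLaplace_ofReal_add_mul_I hf hmeas hε y).mono
          (Icc_subset_Icc haε hbε)).equicontinuousOn
      fun x _ => tendsto_twoSidedLaplace_ofReal_add_mul_I f x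
  obtain ⟨R, hR⟩ : ∃ R, ∀ r ≥ R, ∀ y : ℝ, |y| = r → ∀ x ∈ Icc a₁ b₁,
      dist 0 (twoSidedLaplace f (x + y * I)) < δ := by
    rw [← eventually_atTop, ← eventually_comap, comap_abs_atTop, ← cocompact_eq_atBot_atTop]
    exact Metric.tendstoUniformlyOn_iff.1 hunif δ hδ
  refine ⟨R + max |a₁| |b₁|, fun w h₁ h₂ hw => ?_⟩
  have him : R ≤ |w.im| := by
    linarith [norm_le_abs_re_add_abs_im w, abs_le_max_abs_abs h₁ h₂]
  simpa [re_add_im] using (hR _ him w.im rfl w.re ⟨h₁, h₂⟩).le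

end StripBounds

lemma BLweight_eq (α : ℝ) (A B : ℂ) (s : ℝ) :
    BLweight α A B s = Real.exp (-(cexp (α * I) * A).re * s) +
      Real.exp (-(cexp (α * I) * B).re * s) := by
  simp only [BLweight, ← norm_cexp_neg_mul_ofReal]
  ring_nf

lemma LaplaceDir_eq (α : ℝ) (φ : ℂ → ℂ) (t : ℂ) :
    LaplaceDir α φ t = cexp (α * I) *
      twoSidedLaplace (fun s => φ (cexp (α * I) * s)) (cexp (α * I) * t) := by
  simp only [LaplaceDir, twoSidedLaplace,
    show ∀ s : ℂ, -t * (cexp (α * I) * s) = -(cexp (α * I) * t) * s from fun s => by ring]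

theorem laplace_of_bounded_weight_general
    (α : ℝ) (A B : ℂ)
    (φ : ℂ → ℂ)
    (hmeas : Measurable fun s : ℝ => φ (Complex.exp (α * Complex.I) * s))
    (M : ℝ)
    (hsup : ∀ s : ℝ, ‖φ (Complex.exp (α * Complex.I) * s)‖ * BLweight α A B s ≤ M) :
    (∀ t ∈ openStrip α A B,
        Integrable (fun s : ℝ => φ (Complex.exp (α * Complex.I) * s) *
          Complex.exp (-t * (Complex.exp (α * Complex.I) * s)))) ∧
      DifferentiableOn ℂ (LaplaceDir α φ) (openStrip α A B) ∧
      (∀ A₁ B₁ : ℂ,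
        (Complex.exp (α * Complex.I) * A).re < (Complex.exp (α * Complex.I) * A₁).re →
        (Complex.exp (α * Complex.I) * A₁).re ≤ (Complex.exp (α * Complex.I) * B₁).re →
        (Complex.exp (α * Complex.I) * B₁).re < (Complex.exp (α * Complex.I) * B).re →
        ∀ δ > 0, ∃ ρ : ℝ, ∀ t ∈ closedStrip α A₁ B₁, ρ ≤ ‖t‖ →
          ‖LaplaceDir α φ t‖ ≤ δ) := by
  set u := cexp (α * I)
  have hu : ‖u‖ = 1 := norm_exp_ofReal_mul_I α
  have hf_meas : AEStronglyMeasurable fun s : ℝ => φ (u * s) := hmeas.aestronglyMeasurable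
  have hf : ∀ s : ℝ,
      ‖φ (u * s)‖ * (Real.exp (-(u * A).re * s) + Real.exp (-(u * B).re * s)) ≤ M :=
    fun s => BLweight_eq α A B s ▸ hsup s
  have hL : LaplaceDir α φ = fun t => u * twoSidedLaplace (fun s => φ (u * s)) (u * t) :=
    funext (LaplaceDir_eq α φ)
  refine ⟨fun t ht => ?_, fun t ht => ?_, fun A₁ B₁ hA₁ _ hB₁ δ hδ => ?_⟩
  · have hexp : ∀ s : ℝ, -t * (u * s) = -(u * t) * s := fun s => by ring
    simpa only [hexp] using integrable_mul_cexp_neg_mul hf hf_meas ht.1 ht.2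
  · have hF := (hasDerivAt_twoSidedLaplace hf hf_meas ht.1 ht.2).differentiableAt
    rw [hL]
    exact (hF.comp t (differentiableAt_id.const_mul u)).const_mul u |>.differentiableWithinAt
  · obtain ⟨ρ, hρ⟩ := exists_norm_twoSidedLaplace_le hf hf_meas hA₁ hB₁ hδ
    refine ⟨ρ, fun t ht htρ => ?_⟩
    rw [hL, norm_mul, hu, one_mul]
    exact hρ _ ht.1 ht.2 (by rwa [norm_mul, hu, one_mul])

/-- Corollary 2.4 of the paper. If `|φ|_α^{A,B} < ∞` then the
two-sided Laplace transform `L_α[φ]` converges absolutely and is holomorphic on the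
open strip `T_α^{A,B}`, and tends to `0` at infinity uniformly on every closed
substrip `T̄_α^{A₁,B₁} ⊆ T_α^{A,B}`. -/
theorem laplace_of_bounded_weight
    (α : ℝ) (A B : ℂ)
    (hAB : (Complex.exp (α * Complex.I) * A).re < (Complex.exp (α * Complex.I) * B).re)
    (φ : ℂ → ℂ)
    (hmeas : Measurable fun s : ℝ => φ (Complex.exp (α * Complex.I) * s))
    (M : ℝ)
    (hsup : ∀ s : ℝ, ‖φ (Complex.exp (α * Complex.I) * s)‖ * BLweight α A B s ≤ M) :
    (∀ t ∈ openStrip α A B,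
        Integrable (fun s : ℝ => φ (Complex.exp (α * Complex.I) * s) *
          Complex.exp (-t * (Complex.exp (α * Complex.I) * s)))) ∧
      DifferentiableOn ℂ (LaplaceDir α φ) (openStrip α A B) ∧
      (∀ A₁ B₁ : ℂ,
        (Complex.exp (α * Complex.I) * A).re < (Complex.exp (α * Complex.I) * A₁).re →
        (Complex.exp (α * Complex.I) * A₁).re ≤ (Complex.exp (α * Complex.I) * B₁).re →
        (Complex.exp (α * Complex.I) * B₁).re < (Complex.exp (α * Complex.I) * B).re →
        ∀ δ > 0, ∃ ρ : ℝ, ∀ t ∈ closedStrip α A₁ B₁, ρ ≤ ‖t‖ →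
          ‖LaplaceDir α φ t‖ ≤ δ) :=
  laplace_of_bounded_weight_general α A B φ hmeas M hsup
end

section
/- Let α ∈ ℝ, A, B ∈ ℂ with Re(e^{iα}A) < Re(e^{iα}B), and let φ, ψ be measurable functions on e^{iα}ℝ. Then: (a) if ‖φ‖_α^{A,B} < ∞ and ‖ψ‖_α^{A,B} < ∞, the convolution (φ*ψ)(ξ) exists for almost every ξ ∈ e^{iα}ℝ and ‖φ*ψ‖_α^{A,B} ≤ ‖φ‖_α^{A,B}·‖ψ‖_α^{A,B}; (b) if |φ|_α^{A,B} < ∞ and ‖ψ‖_α^{A,B} < ∞, then (φ*ψ)(ξ) converges absolutely for every ξ ∈ e^{iα}ℝ and |φ*ψ|_α^{A,B} ≤ |φ|_α^{A,B}·‖ψ‖_α^{A,B}; and symmetrically |φ*ψ|_α^{A,B} ≤ ‖φ‖_α^{A,B}·|ψ|_α^{A,B} when ‖φ‖_α^{A,B} < ∞ and |ψ|_α^{A,B} < ∞. -/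
open Complex MeasureTheory

/-- The convolution in direction `α`,
`(φ*ψ)(e^{iα}s) = e^{iα} ∫_ℝ φ(e^{iα}u)·ψ(e^{iα}s − e^{iα}u) du`,
as a function of the real parameter `s`. -/
noncomputable def convDir (α : ℝ) (φ ψ : ℂ → ℂ) (s : ℝ) : ℂ :=
  Complex.exp (α * Complex.I) *
    ∫ u : ℝ, φ (Complex.exp (α * Complex.I) * u) *
      ψ (Complex.exp (α * Complex.I) * s - Complex.exp (α * Complex.I) * u)

/-!
Each term of the weight is the modulus of a character of `(ℝ, +)`, so the weight is
submultiplicative: `w s ≤ w u * w (s - u)`. Hence the weighted integrand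
`|φ(u) ψ(s - u)| w(s)` is dominated by `F u * G (s - u)` with `F = |φ| w` and `G = |ψ| w`, and
the three estimates reduce to the unweighted Young inequalities `L¹ ⋆ L¹ ⊆ L¹` (Tonelli) and
`L^∞ ⋆ L¹ ⊆ L^∞` for the real convolution `F ⋆ G`.
-/

open ContinuousLinearMap
open scoped Convolution

section RealConvolution

variable {G : Type*} [AddGroup G] [MeasurableSpace G] [MeasurableAdd G] [MeasurableNeg G]
  {μ : Measure G} {F H : G → ℝ} {M : ℝ}

lemma convolutionExistsAt_mul_of_le_right (hF : Integrable F μ) (hHm : Measurable H)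
    (hH : ∀ t, |H t| ≤ M) (x : G) : ConvolutionExistsAt F H x (mul ℝ ℝ) μ :=
  hF.mul_bdd (hHm.comp (measurable_id.const_sub x)).aestronglyMeasurable (.of_forall fun _ => hH _)

lemma convolution_mul_le_of_le_right (hF : Integrable F μ) (hF_nonneg : ∀ t, 0 ≤ F t)
    (hHm : Measurable H) (hH : ∀ t, |H t| ≤ M) (x : G) :
    (F ⋆[mul ℝ ℝ, μ] H) x ≤ (∫ t, F t ∂μ) * M := by
  calc (F ⋆[mul ℝ ℝ, μ] H) x ≤ ∫ t, F t * M ∂μ :=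
        integral_mono (convolutionExistsAt_mul_of_le_right hF hHm hH x) (hF.mul_const M)
          fun t => mul_le_mul_of_nonneg_left ((le_abs_self _).trans (hH _)) (hF_nonneg t)
    _ = (∫ t, F t ∂μ) * M := integral_mul_const M F

variable [μ.IsAddLeftInvariant] [μ.IsNegInvariant]

lemma convolutionExistsAt_mul_of_le_left (hFm : Measurable F) (hF : ∀ t, |F t| ≤ M)
    (hH : Integrable H μ) (x : G) : ConvolutionExistsAt F H x (mul ℝ ℝ) μ :=
  (hH.comp_sub_left x).bdd_mul hFm.aestronglyMeasurable (.of_forall hF)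

lemma convolution_mul_le_of_le_left (hFm : Measurable F) (hF : ∀ t, |F t| ≤ M)
    (hH : Integrable H μ) (hH_nonneg : ∀ t, 0 ≤ H t) (x : G) :
    (F ⋆[mul ℝ ℝ, μ] H) x ≤ M * ∫ t, H t ∂μ := by
  calc (F ⋆[mul ℝ ℝ, μ] H) x ≤ ∫ t, M * H (x - t) ∂μ :=
        integral_mono (convolutionExistsAt_mul_of_le_left hFm hF hH x)
          ((hH.comp_sub_left x).const_mul M) fun t =>
          mul_le_mul_of_nonneg_right ((le_abs_self _).trans (hF t)) (hH_nonneg _)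
    _ = M * ∫ t, H t ∂μ := by rw [integral_const_mul, integral_sub_left_eq_self H μ x]

end RealConvolution

section WeightedConvolution

variable {G : Type*} [AddGroup G] {w : G → ℝ} {f g : G → ℂ}

lemma norm_mul_mul_weight_le (hw : ∀ x t, w x ≤ w t * w (x - t)) (x t : G) :
    ‖f t * g (x - t)‖ * w x ≤ ‖f t‖ * w t * (‖g (x - t)‖ * w (x - t)) := by
  calc ‖f t * g (x - t)‖ * w x ≤ ‖f t‖ * ‖g (x - t)‖ * (w t * w (x - t)) := by
        rw [norm_mul]; gcongr; exact hw x t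
    _ = ‖f t‖ * w t * (‖g (x - t)‖ * w (x - t)) := by ring

variable [MeasurableSpace G] [MeasurableSub G] {μ : Measure G}

lemma integrable_mul_comp_sub_of_convolutionExistsAt (hf : Measurable f) (hg : Measurable g)
    (hw_pos : ∀ x, 0 < w x) (hw : ∀ x t, w x ≤ w t * w (x - t)) {x : G}
    (hfg : ConvolutionExistsAt (fun t => ‖f t‖ * w t) (fun t => ‖g t‖ * w t) x (mul ℝ ℝ) μ) :
    Integrable (fun t => f t * g (x - t)) μ := by
  refine (hfg.integrable.const_mul (w x)⁻¹).mono'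
    (hf.mul (hg.comp (measurable_id.const_sub x))).aestronglyMeasurable
    (.of_forall fun t => ?_)
  rw [mul_apply', ← div_eq_inv_mul, le_div_iff₀ (hw_pos x)]
  exact norm_mul_mul_weight_le hw x t

lemma norm_integral_mul_comp_sub_mul_weight_le (hf : Measurable f) (hg : Measurable g)
    (hw_pos : ∀ x, 0 < w x) (hw : ∀ x t, w x ≤ w t * w (x - t)) {x : G}
    (hfg : ConvolutionExistsAt (fun t => ‖f t‖ * w t) (fun t => ‖g t‖ * w t) x (mul ℝ ℝ) μ) :
    ‖∫ t, f t * g (x - t) ∂μ‖ * w x ≤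
      ((fun t => ‖f t‖ * w t) ⋆[mul ℝ ℝ, μ] (fun t => ‖g t‖ * w t)) x := by
  have hint := integrable_mul_comp_sub_of_convolutionExistsAt hf hg hw_pos hw hfg
  calc ‖∫ t, f t * g (x - t) ∂μ‖ * w x ≤ ∫ t, ‖f t * g (x - t)‖ * w x ∂μ := by
        rw [integral_mul_const]
        exact mul_le_mul_of_nonneg_right (norm_integral_le_integral_norm _) (hw_pos x).le
    _ ≤ _ := integral_mono (hint.norm.mul_const _) hfg.integrable
        fun t => norm_mul_mul_weight_le hw x t

variable [MeasurableAdd₂ G] [MeasurableNeg G] [SFinite μ] [μ.IsAddRightInvariant]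

lemma ae_integrable_mul_comp_sub (hf : Measurable f) (hg : Measurable g)
    (hw_pos : ∀ x, 0 < w x) (hw : ∀ x t, w x ≤ w t * w (x - t))
    (hF : Integrable (fun t => ‖f t‖ * w t) μ) (hG : Integrable (fun t => ‖g t‖ * w t) μ) :
    ∀ᵐ x ∂μ, Integrable (fun t => f t * g (x - t)) μ :=
  (hF.ae_convolution_exists (mul ℝ ℝ) hG).mono fun _ hx =>
    integrable_mul_comp_sub_of_convolutionExistsAt hf hg hw_pos hw hx

lemma lintegral_norm_integral_mul_comp_sub_mul_weight_le (hf : Measurable f) (hg : Measurable g)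
    (hw_pos : ∀ x, 0 < w x) (hw : ∀ x t, w x ≤ w t * w (x - t))
    (hF : Integrable (fun t => ‖f t‖ * w t) μ) (hG : Integrable (fun t => ‖g t‖ * w t) μ) :
    ∫⁻ x, ENNReal.ofReal (‖∫ t, f t * g (x - t) ∂μ‖ * w x) ∂μ ≤
      ENNReal.ofReal (∫ t, ‖f t‖ * w t ∂μ) * ENNReal.ofReal (∫ t, ‖g t‖ * w t ∂μ) := by
  have hF_nonneg : ∀ t, 0 ≤ ‖f t‖ * w t := fun t => mul_nonneg (norm_nonneg _) (hw_pos t).le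
  have hG_nonneg : ∀ t, 0 ≤ ‖g t‖ * w t := fun t => mul_nonneg (norm_nonneg _) (hw_pos t).le
  calc ∫⁻ x, ENNReal.ofReal (‖∫ t, f t * g (x - t) ∂μ‖ * w x) ∂μ
      ≤ ∫⁻ x, ENNReal.ofReal
          (((fun t => ‖f t‖ * w t) ⋆[mul ℝ ℝ, μ] (fun t => ‖g t‖ * w t)) x) ∂μ :=
        lintegral_mono_ae <| (hF.ae_convolution_exists (mul ℝ ℝ) hG).mono fun _ hx =>
          ENNReal.ofReal_le_ofReal (norm_integral_mul_comp_sub_mul_weight_le hf hg hw_pos hw hx)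
    _ = ENNReal.ofReal
          (∫ x, ((fun t => ‖f t‖ * w t) ⋆[mul ℝ ℝ, μ] (fun t => ‖g t‖ * w t)) x ∂μ) :=
        (ofReal_integral_eq_lintegral_ofReal (hF.integrable_convolution _ hG) (.of_forall
          fun x => integral_nonneg fun t => mul_nonneg (hF_nonneg t) (hG_nonneg _))).symm
    _ = ENNReal.ofReal (∫ t, ‖f t‖ * w t ∂μ) * ENNReal.ofReal (∫ t, ‖g t‖ * w t ∂μ) := by
        rw [integral_convolution _ hF hG, mul_apply',
          ENNReal.ofReal_mul (integral_nonneg hF_nonneg)]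

end WeightedConvolution

lemma BLweight_pos (α : ℝ) (A B : ℂ) (s : ℝ) : 0 < BLweight α A B s :=
  add_pos (norm_pos_iff.mpr (exp_ne_zero _)) (norm_pos_iff.mpr (exp_ne_zero _))

lemma continuous_BLweight (α : ℝ) (A B : ℂ) : Continuous (BLweight α A B) := by
  unfold BLweight; fun_prop

lemma BLweight_le_mul (α : ℝ) (A B : ℂ) (s u : ℝ) :
    BLweight α A B s ≤ BLweight α A B u * BLweight α A B (s - u) := by
  have hchar : ∀ C : ℂ, ‖exp (-C * (exp (α * I) * s))‖ =
      ‖exp (-C * (exp (α * I) * u))‖ * ‖exp (-C * (exp (α * I) * ↑(s - u)))‖ := fun C => by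
    rw [← norm_mul, ← exp_add]; push_cast; ring_nf
  have hexpand : ∀ a b c d : ℝ, 0 ≤ a → 0 ≤ b → 0 ≤ c → 0 ≤ d →
      a * c + b * d ≤ (a + b) * (c + d) := fun a b c d ha hb hc hd => by
    nlinarith [mul_nonneg ha hd, mul_nonneg hb hc]
  rw [BLweight, BLweight, BLweight, hchar A, hchar B]
  exact hexpand _ _ _ _ (norm_nonneg _) (norm_nonneg _) (norm_nonneg _) (norm_nonneg _)

lemma norm_convDir (α : ℝ) (φ ψ : ℂ → ℂ) (s : ℝ) :
    ‖convDir α φ ψ s‖ = ‖∫ u : ℝ, φ (exp (α * I) * u) * ψ (exp (α * I) * ↑(s - u))‖ := by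
  simp only [convDir, norm_mul, norm_exp_ofReal_mul_I, one_mul, ofReal_sub, mul_sub]

theorem young_inequalities_dir_general
    (α : ℝ) (A B : ℂ)
    (φ ψ : ℂ → ℂ)
    (hmφ : Measurable fun s : ℝ => φ (Complex.exp (α * Complex.I) * s))
    (hmψ : Measurable fun s : ℝ => ψ (Complex.exp (α * Complex.I) * s)) :
    -- (a) if ‖φ‖, ‖ψ‖ < ∞ then φ*ψ exists a.e. and ‖φ*ψ‖ ≤ ‖φ‖·‖ψ‖
    ((Integrable fun s : ℝ => ‖φ (Complex.exp (α * Complex.I) * s)‖ * BLweight α A B s) →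
     (Integrable fun s : ℝ => ‖ψ (Complex.exp (α * Complex.I) * s)‖ * BLweight α A B s) →
      (∀ᵐ s : ℝ, Integrable fun u : ℝ =>
          φ (Complex.exp (α * Complex.I) * u) *
            ψ (Complex.exp (α * Complex.I) * s - Complex.exp (α * Complex.I) * u)) ∧
      (∫⁻ s : ℝ, ENNReal.ofReal (‖convDir α φ ψ s‖ * BLweight α A B s)) ≤
        ENNReal.ofReal
            (∫ s : ℝ, ‖φ (Complex.exp (α * Complex.I) * s)‖ * BLweight α A B s) *
          ENNReal.ofReal
            (∫ s : ℝ, ‖ψ (Complex.exp (α * Complex.I) * s)‖ * BLweight α A B s)) ∧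
    -- (b) if |φ| ≤ Mφ and ‖ψ‖ < ∞ then φ*ψ converges absolutely everywhere and
    --     |φ*ψ| ≤ |φ|·‖ψ‖
    (∀ Mφ : ℝ,
      (∀ s : ℝ, ‖φ (Complex.exp (α * Complex.I) * s)‖ * BLweight α A B s ≤ Mφ) →
      (Integrable fun s : ℝ => ‖ψ (Complex.exp (α * Complex.I) * s)‖ * BLweight α A B s) →
      (∀ s : ℝ, Integrable fun u : ℝ =>
          φ (Complex.exp (α * Complex.I) * u) *
            ψ (Complex.exp (α * Complex.I) * s - Complex.exp (α * Complex.I) * u)) ∧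
      (∀ s : ℝ, ‖convDir α φ ψ s‖ * BLweight α A B s ≤
        Mφ * ∫ u : ℝ, ‖ψ (Complex.exp (α * Complex.I) * u)‖ * BLweight α A B u)) ∧
    -- symmetric version: |φ*ψ| ≤ ‖φ‖·|ψ|
    (∀ Mψ : ℝ,
      (Integrable fun s : ℝ => ‖φ (Complex.exp (α * Complex.I) * s)‖ * BLweight α A B s) →
      (∀ s : ℝ, ‖ψ (Complex.exp (α * Complex.I) * s)‖ * BLweight α A B s ≤ Mψ) →
      (∀ s : ℝ, Integrable fun u : ℝ =>
          φ (Complex.exp (α * Complex.I) * u) *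
            ψ (Complex.exp (α * Complex.I) * s - Complex.exp (α * Complex.I) * u)) ∧
      (∀ s : ℝ, ‖convDir α φ ψ s‖ * BLweight α A B s ≤
        (∫ u : ℝ, ‖φ (Complex.exp (α * Complex.I) * u)‖ * BLweight α A B u) * Mψ)) := by
  have hw_pos := BLweight_pos α A B
  have hw := BLweight_le_mul α A B
  have hwm := (continuous_BLweight α A B).measurable
  have hnonneg : ∀ (h : ℂ → ℂ) (t : ℝ), 0 ≤ ‖h (exp (α * I) * t)‖ * BLweight α A B t :=
    fun _ t => mul_nonneg (norm_nonneg _) (hw_pos t).le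
  have hline : ∀ s u : ℝ, exp (α * I) * s - exp (α * I) * u = exp (α * I) * ↑(s - u) :=
    fun s u => by push_cast; ring
  simp only [hline, norm_convDir]
  -- `(e :)` elaborates `e` before unifying, so `f` and `g` are read off from `hmφ` and `hmψ`
  -- instead of being guessed by higher-order unification against the goal.
  refine ⟨fun hF hG => ⟨(ae_integrable_mul_comp_sub hmφ hmψ hw_pos hw hF hG :),
      (lintegral_norm_integral_mul_comp_sub_mul_weight_le hmφ hmψ hw_pos hw hF hG :)⟩,
    fun M hF hG => ?_, fun M hF hG => ?_⟩
  · have hF_abs (t : ℝ) : |‖φ (exp (α * I) * t)‖ * BLweight α A B t| ≤ M := by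
      rw [abs_of_nonneg (hnonneg φ t)]; exact hF t
    have hconv := convolutionExistsAt_mul_of_le_left (hmφ.norm.mul hwm) hF_abs hG
    exact ⟨fun s => (integrable_mul_comp_sub_of_convolutionExistsAt hmφ hmψ hw_pos hw (hconv s) :),
      fun s => (norm_integral_mul_comp_sub_mul_weight_le hmφ hmψ hw_pos hw (hconv s)).trans
        (convolution_mul_le_of_le_left (hmφ.norm.mul hwm) hF_abs hG (hnonneg ψ) s)⟩
  · have hG_abs (t : ℝ) : |‖ψ (exp (α * I) * t)‖ * BLweight α A B t| ≤ M := by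
      rw [abs_of_nonneg (hnonneg ψ t)]; exact hG t
    have hconv := convolutionExistsAt_mul_of_le_right hF (hmψ.norm.mul hwm) hG_abs
    exact ⟨fun s => (integrable_mul_comp_sub_of_convolutionExistsAt hmφ hmψ hw_pos hw (hconv s) :),
      fun s => (norm_integral_mul_comp_sub_mul_weight_le hmφ hmψ hw_pos hw (hconv s)).trans
        (convolution_mul_le_of_le_right hF (hnonneg φ) (hmψ.norm.mul hwm) hG_abs s)⟩

/-- Young's inequalities, Lemma 2.8 of the paper. -/
theorem young_inequalities_dir
    (α : ℝ) (A B : ℂ)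
    (hAB : (Complex.exp (α * Complex.I) * A).re < (Complex.exp (α * Complex.I) * B).re)
    (φ ψ : ℂ → ℂ)
    (hmφ : Measurable fun s : ℝ => φ (Complex.exp (α * Complex.I) * s))
    (hmψ : Measurable fun s : ℝ => ψ (Complex.exp (α * Complex.I) * s)) :
    -- (a) if ‖φ‖, ‖ψ‖ < ∞ then φ*ψ exists a.e. and ‖φ*ψ‖ ≤ ‖φ‖·‖ψ‖
    ((Integrable fun s : ℝ => ‖φ (Complex.exp (α * Complex.I) * s)‖ * BLweight α A B s) →
     (Integrable fun s : ℝ => ‖ψ (Complex.exp (α * Complex.I) * s)‖ * BLweight α A B s) →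
      (∀ᵐ s : ℝ, Integrable fun u : ℝ =>
          φ (Complex.exp (α * Complex.I) * u) *
            ψ (Complex.exp (α * Complex.I) * s - Complex.exp (α * Complex.I) * u)) ∧
      (∫⁻ s : ℝ, ENNReal.ofReal (‖convDir α φ ψ s‖ * BLweight α A B s)) ≤
        ENNReal.ofReal
            (∫ s : ℝ, ‖φ (Complex.exp (α * Complex.I) * s)‖ * BLweight α A B s) *
          ENNReal.ofReal
            (∫ s : ℝ, ‖ψ (Complex.exp (α * Complex.I) * s)‖ * BLweight α A B s)) ∧
    -- (b) if |φ| ≤ Mφ and ‖ψ‖ < ∞ then φ*ψ converges absolutely everywhere and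
    --     |φ*ψ| ≤ |φ|·‖ψ‖
    (∀ Mφ : ℝ,
      (∀ s : ℝ, ‖φ (Complex.exp (α * Complex.I) * s)‖ * BLweight α A B s ≤ Mφ) →
      (Integrable fun s : ℝ => ‖ψ (Complex.exp (α * Complex.I) * s)‖ * BLweight α A B s) →
      (∀ s : ℝ, Integrable fun u : ℝ =>
          φ (Complex.exp (α * Complex.I) * u) *
            ψ (Complex.exp (α * Complex.I) * s - Complex.exp (α * Complex.I) * u)) ∧
      (∀ s : ℝ, ‖convDir α φ ψ s‖ * BLweight α A B s ≤
        Mφ * ∫ u : ℝ, ‖ψ (Complex.exp (α * Complex.I) * u)‖ * BLweight α A B u)) ∧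
    -- symmetric version: |φ*ψ| ≤ ‖φ‖·|ψ|
    (∀ Mψ : ℝ,
      (Integrable fun s : ℝ => ‖φ (Complex.exp (α * Complex.I) * s)‖ * BLweight α A B s) →
      (∀ s : ℝ, ‖ψ (Complex.exp (α * Complex.I) * s)‖ * BLweight α A B s ≤ Mψ) →
      (∀ s : ℝ, Integrable fun u : ℝ =>
          φ (Complex.exp (α * Complex.I) * u) *
            ψ (Complex.exp (α * Complex.I) * s - Complex.exp (α * Complex.I) * u)) ∧
      (∀ s : ℝ, ‖convDir α φ ψ s‖ * BLweight α A B s ≤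
        (∫ u : ℝ, ‖φ (Complex.exp (α * Complex.I) * u)‖ * BLweight α A B u) * Mψ)) :=
  young_inequalities_dir_general α A B φ ψ hmφ hmψ
end

section
/- Let C, K, R > 0 with R·K < 1. Then there exists C′ > 0, depending only on C, K and R, such that for every ε ∈ ℂ with 2√|ε| < R, every ξ ∈ ℂ, and every sequence (aₙ)_{n≥1} of complex numbers with |aₙ| ≤ C·Kⁿ for all n ≥ 1, one has ∑_{n=1}^{∞} |aₙ| · ∏_{k=1}^{n−1} ( |ξ|/k + 2√|ε| ) ≤ C′ · (1 + √|ξ|) · e^{|ξ|/(R − 2√|ε|)}. In particular, the series ∑_{n≥1} aₙ · ∏_{k=1}^{n−1}(ξ/k − 2√ε) converges absolutely for every ξ ∈ ℂ and defines an entire function of ξ with at most this exponential growth, uniformly in ε. -/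
/-!
For `0 < β < 1` the product `∏_{k=1}^n (x/k + β)` equals `β^n` times the binomial coefficient
`multichoose (x/β + 1) n`, so by the binomial series `∑_n ∏_{k=1}^n (x/k + β) = (1 - β)^{-(x/β+1)}`
(for `β = 0` it is the exponential series). Since `-log (1 - β) ≤ β / (1 - β)`, this sum is at
most `(1 - β)⁻¹ e^{x/(1-β)}`. Pulling the geometric factor `K^n` of the coefficients into the
product turns `(x, 2√|ε|)` into `(K x, 2K√|ε|)`, and `R K < 1` gives
`K / (1 - 2K√|ε|) ≤ 1 / (R - 2√|ε|)`. The resulting majorant, locally uniform in `ξ`, also makes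
the complex series an entire function.
-/

open Finset Real
open scoped Nat

lemma factorial_mul_prod_div_add (x : ℝ) {β : ℝ} (hβ : β ≠ 0) (n : ℕ) :
    (n ! : ℝ) * ∏ k ∈ Icc 1 n, (x / k + β) = β ^ n * (ascPochhammer ℝ n).eval (x / β + 1) := by
  induction n with
  | zero => simp
  | succ n ih =>
    have hn : ((n : ℝ) + 1) * (x / (n + 1)) = x := mul_div_cancel₀ x (by positivity)
    rw [prod_Icc_succ_top (by omega), ascPochhammer_succ_eval, Nat.factorial_succ]
    push_cast
    linear_combination ((n + 1) * (x / (n + 1) + β)) * ih +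
      β ^ n * (ascPochhammer ℝ n).eval (x / β + 1) * (hn - mul_div_cancel₀ x hβ)

lemma prod_div_add_eq_multichoose_mul_pow (x : ℝ) {β : ℝ} (hβ : β ≠ 0) (n : ℕ) :
    ∏ k ∈ Icc 1 n, (x / k + β) = Ring.multichoose (x / β + 1) n * β ^ n := by
  have h := Ring.factorial_nsmul_multichoose_eq_ascPochhammer (x / β + 1) n
  rw [Polynomial.ascPochhammer_smeval_eq_eval, nsmul_eq_mul] at h
  apply mul_left_cancel₀ (by positivity : (n ! : ℝ) ≠ 0)
  linear_combination factorial_mul_prod_div_add x hβ n - β ^ n * h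

lemma hasSum_prod_div_add (x : ℝ) {β : ℝ} (hβ0 : 0 < β) (hβ1 : β < 1) :
    HasSum (fun n : ℕ ↦ ∏ k ∈ Icc 1 n, (x / k + β)) (1 / (1 - β) ^ (x / β + 1)) := by
  have h := (Real.one_div_one_sub_rpow_hasFPowerSeriesOnBall_zero (x / β + 1)).hasSum (y := β)
    (by simpa [enorm_eq_nnnorm, ← NNReal.coe_lt_coe, abs_of_pos hβ0] using hβ1)
  simpa [FormalMultilinearSeries.ofScalars_apply_eq, ← Ring.multichoose_eq, mul_comm,
    prod_div_add_eq_multichoose_mul_pow x hβ0.ne'] using h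

lemma prod_div_eq_pow_div_factorial (x : ℝ) (n : ℕ) : ∏ k ∈ Icc 1 n, x / k = x ^ n / n ! := by
  induction n with
  | zero => simp
  | succ n ih =>
    rw [prod_Icc_succ_top (by omega), ih, Nat.factorial_succ]
    push_cast
    field_simp
    ring

lemma one_div_one_sub_rpow_le {x β : ℝ} (hx : 0 ≤ x) (hβ0 : 0 < β) (hβ1 : β < 1) :
    1 / (1 - β) ^ (x / β + 1) ≤ (1 - β)⁻¹ * exp (x / (1 - β)) := by
  have h1β : 0 < 1 - β := by linarith
  have hlog : -(x / (1 - β)) ≤ log (1 - β) * (x / β) :=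
    calc -(x / (1 - β)) = (1 - (1 - β)⁻¹) * (x / β) := by field_simp; ring
      _ ≤ log (1 - β) * (x / β) := by gcongr; exact one_sub_inv_le_log_of_pos h1β
  rw [rpow_add_one h1β.ne', rpow_def_of_pos h1β, one_div, mul_inv, mul_comm, ← exp_neg]
  gcongr
  linarith

lemma exists_hasSum_prod_div_add_le {x β : ℝ} (hx : 0 ≤ x) (hβ0 : 0 ≤ β) (hβ1 : β < 1) :
    ∃ S, HasSum (fun n : ℕ ↦ ∏ k ∈ Icc 1 n, (x / k + β)) S ∧
      S ≤ (1 - β)⁻¹ * exp (x / (1 - β)) := by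
  rcases hβ0.eq_or_lt with rfl | hβ0
  · refine ⟨exp x, ?_, by simp⟩
    simp only [add_zero, prod_div_eq_pow_div_factorial, exp_eq_exp_ℝ]
    exact NormedSpace.expSeries_div_hasSum_exp x
  · exact ⟨_, hasSum_prod_div_add x hβ0 hβ1, one_div_one_sub_rpow_le hx hβ0 hβ1⟩

lemma prod_div_add_nonneg {x s : ℝ} (hx : 0 ≤ x) (hs : 0 ≤ s) (n : ℕ) :
    0 ≤ ∏ k ∈ Icc 1 n, (x / k + s) :=
  prod_nonneg fun _ _ ↦ by positivity

lemma prod_div_add_le_prod_div_add {x y s : ℝ} (hx : 0 ≤ x) (hxy : x ≤ y) (hs : 0 ≤ s) (n : ℕ) :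
    ∏ k ∈ Icc 1 n, (x / k + s) ≤ ∏ k ∈ Icc 1 n, (y / k + s) :=
  prod_le_prod (fun _ _ ↦ by positivity) fun _ _ ↦ by gcongr

lemma pow_mul_prod_div_add (K x s : ℝ) (n : ℕ) :
    K ^ n * ∏ k ∈ Icc 1 n, (x / k + s) = ∏ k ∈ Icc 1 n, (K * x / k + K * s) := by
  have hcard : #(Icc 1 n) = n := by simp
  nth_rw 1 [← hcard]
  rw [pow_card_mul_prod]
  exact prod_congr rfl fun _ _ ↦ by ring

lemma summable_mul_prod_div_add_and_tsum_le {C K R s x : ℝ} {b : ℕ → ℝ} (hC : 0 ≤ C)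
    (hK : 0 ≤ K) (hRK : R * K < 1) (hs : 0 ≤ s) (hsR : s < R) (hx : 0 ≤ x)
    (hb0 : ∀ n, 0 ≤ b n) (hb : ∀ n, b n ≤ C * K ^ (n + 1)) :
    (Summable fun n ↦ b n * ∏ k ∈ Icc 1 n, (x / k + s)) ∧
      ∑' n, b n * ∏ k ∈ Icc 1 n, (x / k + s) ≤ C * K / (1 - R * K) * exp (x / (R - s)) := by
  have hKs : K * s < 1 := by nlinarith
  obtain ⟨S, hS, hSle⟩ := exists_hasSum_prod_div_add_le (x := K * x) (by positivity)
    (by positivity) hKs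
  have hmaj : HasSum (fun n : ℕ ↦ C * K ^ (n + 1) * ∏ k ∈ Icc 1 n, (x / k + s)) (C * K * S) := by
    simp_rw [pow_succ', ← mul_assoc, mul_assoc (C * K), pow_mul_prod_div_add K x s]
    exact hS.mul_left (C * K)
  have hle (n : ℕ) : b n * ∏ k ∈ Icc 1 n, (x / k + s) ≤
      C * K ^ (n + 1) * ∏ k ∈ Icc 1 n, (x / k + s) :=
    mul_le_mul_of_nonneg_right (hb n) (prod_div_add_nonneg hx hs n)
  have hsum : Summable fun n ↦ b n * ∏ k ∈ Icc 1 n, (x / k + s) :=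
    .of_nonneg_of_le (fun n ↦ mul_nonneg (hb0 n) (prod_div_add_nonneg hx hs n)) hle hmaj.summable
  refine ⟨hsum, (hsum.tsum_le_tsum hle hmaj.summable).trans ?_⟩
  have hinv : (1 - K * s)⁻¹ ≤ (1 - R * K)⁻¹ := inv_anti₀ (by linarith) (by nlinarith)
  have hexp : K * x / (1 - K * s) ≤ x / (R - s) := by
    rw [div_le_div_iff₀ (by linarith) (by linarith)]
    nlinarith [mul_nonneg hx hK]
  calc ∑' n : ℕ, C * K ^ (n + 1) * ∏ k ∈ Icc 1 n, (x / k + s)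
      = C * K * S := hmaj.tsum_eq
    _ ≤ C * K * ((1 - R * K)⁻¹ * exp (x / (R - s))) := by gcongr; exact hSle.trans (by gcongr)
    _ = C * K / (1 - R * K) * exp (x / (R - s)) := by ring

lemma norm_mul_prod_div_sub_le (c z w : ℂ) (n : ℕ) :
    ‖c * ∏ k ∈ Icc 1 n, (z / k - w)‖ ≤ ‖c‖ * ∏ k ∈ Icc 1 n, (‖z‖ / k + ‖w‖) := by
  rw [norm_mul, norm_prod]
  gcongr with k
  exact (norm_sub_le _ _).trans_eq (by simp)

lemma differentiable_tsum_mul_prod_div_sub {a : ℕ → ℂ} {w : ℂ}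
    (h : ∀ r, 0 ≤ r → Summable fun n ↦ ‖a n‖ * ∏ k ∈ Icc 1 n, (r / k + ‖w‖)) :
    Differentiable ℂ fun z ↦ ∑' n, a n * ∏ k ∈ Icc 1 n, (z / k - w) := by
  intro z₀
  have hball : DifferentiableOn ℂ (fun z ↦ ∑' n, a n * ∏ k ∈ Icc 1 n, (z / k - w))
      (Metric.ball 0 (‖z₀‖ + 1)) := by
    refine Complex.differentiableOn_tsum_of_summable_norm (h (‖z₀‖ + 1) (by positivity))
      (fun n ↦ Differentiable.differentiableOn (by fun_prop)) Metric.isOpen_ball fun n z hz ↦ ?_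
    rw [mem_ball_zero_iff] at hz
    exact (norm_mul_prod_div_sub_le _ _ _ n).trans <| mul_le_mul_of_nonneg_left
      (prod_div_add_le_prod_div_add (norm_nonneg z) hz.le (norm_nonneg w) n) (norm_nonneg _)
  exact hball.differentiableAt (Metric.isOpen_ball.mem_nhds (by simp))

theorem series_growth_estimate_general
    (C K R : ℝ) (hC : 0 < C) (hK : 0 < K) (hRK : R * K < 1) :
    ∃ C' : ℝ, 0 < C' ∧
      ∀ (ε : ℂ) (ξ : ℂ) (a : ℕ → ℂ),
        2 * Real.sqrt (‖ε‖) < R →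
        (∀ n : ℕ, 1 ≤ n → ‖a n‖ ≤ C * K ^ n) →
        -- absolute convergence of the majorant series and the growth bound
        (Summable fun n : ℕ => ‖a (n + 1)‖ *
          ∏ k ∈ Finset.Icc 1 n, (‖ξ‖ / (k : ℝ) + 2 * Real.sqrt (‖ε‖))) ∧
        (∑' n : ℕ, ‖a (n + 1)‖ *
            ∏ k ∈ Finset.Icc 1 n, (‖ξ‖ / (k : ℝ) + 2 * Real.sqrt (‖ε‖))) ≤
          C' * (1 + Real.sqrt (‖ξ‖)) *
            Real.exp (‖ξ‖ / (R - 2 * Real.sqrt (‖ε‖))) ∧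
        -- in particular: absolute convergence of the series itself and entirety
        (∀ sqe : ℂ, sqe ^ 2 = ε →
          (Summable fun n : ℕ => ‖a (n + 1) *
            ∏ k ∈ Finset.Icc 1 n, (ξ / (k : ℂ) - 2 * sqe)‖) ∧
          Differentiable ℂ (fun z : ℂ => ∑' n : ℕ, a (n + 1) *
            ∏ k ∈ Finset.Icc 1 n, (z / (k : ℂ) - 2 * sqe))) := by
  refine ⟨C * K / (1 - R * K), div_pos (mul_pos hC hK) (sub_pos.2 hRK), ?_⟩
  intro ε ξ a hε ha
  have hmaj (x : ℝ) (hx : 0 ≤ x) := summable_mul_prod_div_add_and_tsum_le hC.le hK.le hRK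
    (by positivity) hε hx (fun n ↦ norm_nonneg (a (n + 1))) fun n ↦ ha (n + 1) (by omega)
  obtain ⟨hsum, hle⟩ := hmaj ‖ξ‖ (norm_nonneg ξ)
  refine ⟨hsum, hle.trans ?_, fun sqe hsqe ↦ ?_⟩
  · rw [mul_right_comm]
    exact le_mul_of_one_le_right (by positivity) (by linarith [sqrt_nonneg ‖ξ‖])
  have hw : ‖2 * sqe‖ = 2 * √‖ε‖ := by simp [← hsqe, sqrt_sq (norm_nonneg sqe)]
  refine ⟨.of_nonneg_of_le (fun _ ↦ norm_nonneg _) (fun n ↦ ?_) hsum,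
    differentiable_tsum_mul_prod_div_sub fun r hr ↦ hw ▸ (hmaj r hr).1⟩
  exact hw ▸ norm_mul_prod_div_sub_le _ _ _ n

/-- the estimate in the proof of Proposition 3.3, part 4, of the
paper. A series `∑ aₙ ∏_{k=1}^{n−1}(ξ/k − 2√ε)` with geometrically bounded
coefficients converges absolutely, uniformly in `ε`, with growth at most
`C′(1+√|ξ|)·e^{|ξ|/(R−2√|ε|)}`, and defines an entire function of `ξ`. -/
theorem series_growth_estimate
    (C K R : ℝ) (hC : 0 < C) (hK : 0 < K) (hR : 0 < R) (hRK : R * K < 1) :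
    ∃ C' : ℝ, 0 < C' ∧
      ∀ (ε : ℂ) (ξ : ℂ) (a : ℕ → ℂ),
        2 * Real.sqrt (‖ε‖) < R →
        (∀ n : ℕ, 1 ≤ n → ‖a n‖ ≤ C * K ^ n) →
        -- absolute convergence of the majorant series and the growth bound
        (Summable fun n : ℕ => ‖a (n + 1)‖ *
          ∏ k ∈ Finset.Icc 1 n, (‖ξ‖ / (k : ℝ) + 2 * Real.sqrt (‖ε‖))) ∧
        (∑' n : ℕ, ‖a (n + 1)‖ *
            ∏ k ∈ Finset.Icc 1 n, (‖ξ‖ / (k : ℝ) + 2 * Real.sqrt (‖ε‖))) ≤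
          C' * (1 + Real.sqrt (‖ξ‖)) *
            Real.exp (‖ξ‖ / (R - 2 * Real.sqrt (‖ε‖))) ∧
        -- in particular: absolute convergence of the series itself and entirety
        (∀ sqe : ℂ, sqe ^ 2 = ε →
          (Summable fun n : ℕ => ‖a (n + 1) *
            ∏ k ∈ Finset.Icc 1 n, (ξ / (k : ℂ) - 2 * sqe)‖) ∧
          Differentiable ℂ (fun z : ℂ => ∑' n : ℕ, a (n + 1) *
            ∏ k ∈ Finset.Icc 1 n, (z / (k : ℂ) - 2 * sqe))) :=
  series_growth_estimate_general C K R hC hK hRK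
end

section
/- Let E be a commutative non-unital complex Banach algebra with submultiplicative norm (‖uv‖ ≤ ‖u‖·‖v‖), and let m ≥ 1. For φ = (φ₁,…,φ_m) ∈ E^m write ‖φ‖ := max_i ‖φᵢ‖, and for a multi-index l ∈ ℕ^m with |l| ≥ 1 write φ^l := φ₁^{l₁}⋯φ_m^{l_m} ∈ E. Suppose given constants K, L, K₁, δ > 0, vectors μ_l ∈ ℂ^m for each l with |l| ≥ 2 satisfying max_i |(μ_l)ᵢ| ≤ K·binom(|l|,l)·L^{|l|}, elements w₀ ∈ E^m with ‖w₀‖ ≤ K₁ and w_l ∈ E^m for |l| ≥ 1 with ‖w_l‖ ≤ K₁·binom(|l|,l)·L^{|l|}, and a linear map Θ : E^m → E^m with ‖Θ(v)‖ ≤ δ·‖v‖ for all v ∈ E^m. Define G(φ) := Θ( ∑_{|l|≥2} μ_l·φ^l + w₀ + ∑_{|l|≥1} w_l ⋆ φ^l ), where μ_l·φ^l := ((μ_l)₁ φ^l,…,(μ_l)_m φ^l) ∈ E^m and w_l ⋆ φ^l := ((w_l)₁·φ^l,…,(w_l)_m·φ^l) ∈ E^m. Assume δ ≥ 1/(10mKL),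 set c := 1/(50 m² δ K L²), and assume K₁ ≤ (5cmL)²·K. Then for every φ ∈ E^m with ‖φ‖ ≤ c the defining series of G(φ) converge absolutely in E^m and ‖G(φ)‖ ≤ c; for all φ, ψ with ‖φ‖, ‖ψ‖ ≤ c one has ‖G(φ) − G(ψ)‖ ≤ ½·‖φ − ψ‖; consequently G has a unique fixed point ỹ ∈ E^m with ‖ỹ‖ ≤ c. -/
open Complex

/-- Product of a (nonempty) list of elements of a non-unital ring; the empty list is
sent to `0` (only lists of length ≥ 1 are ever used). -/
noncomputable def mprod {E : Type*} [Mul E] [Zero E] : List E → E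
  | [] => 0
  | a :: l => l.foldl (· * ·) a

/-- The multi-power `φ^l = φ₁^{l₁} ⋯ φ_m^{l_m}` in a non-unital commutative ring,
defined for multi-indices `l` with `|l| ≥ 1`. -/
noncomputable def mpow {E : Type*} [Mul E] [Zero E] {m : ℕ} (φ : Fin m → E)
    (l : Fin m → ℕ) : E :=
  mprod (((List.finRange m).flatMap fun i => List.replicate (l i) (φ i)))

/-- The operator `G(φ) = Θ( ∑_{|l|≥2} μ_l·φ^l + w₀ + ∑_{|l|≥1} w_l ⋆ φ^l )`. -/
noncomputable def Gop {E : Type*} [NonUnitalNormedCommRing E] [NormedSpace ℂ E]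
    {m : ℕ} (μ : (Fin m → ℕ) → Fin m → ℂ) (w₀ : Fin m → E)
    (w : (Fin m → ℕ) → Fin m → E) (Θ : (Fin m → E) →ₗ[ℂ] (Fin m → E))
    (φ : Fin m → E) : Fin m → E :=
  Θ (fun i =>
    (∑' l : Fin m → ℕ, if 2 ≤ ∑ j, l j then (μ l i) • mpow φ l else 0) + w₀ i +
      (∑' l : Fin m → ℕ, if 1 ≤ ∑ j, l j then (w l i) * mpow φ l else 0))

/-!
Every `φ^l` is a product of `|l|` factors of norm at most `r`, so `‖φ^l‖ ≤ r^|l|` and, by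
telescoping, `‖φ^l - ψ^l‖ ≤ |l| r^(|l|-1) ‖φ - ψ‖`. Since the multinomial coefficients of degree
`k` add up to `m^k`, both series of `G` are dominated by tails of `∑ y^k` and `∑ k y^k` with
`y = m L c ≤ 1/5`. The choice of `c` makes `δ K y² = c/50` and `K₁ ≤ 25 K y²`, which turns these
tails into `‖G φ‖ ≤ c` and a Lipschitz constant `≤ 1/2` on the ball; Banach's fixed point
theorem on the closed ball then gives the unique fixed point.
-/

open Finset Set Function

section MultiPower

theorem mprod_cons {E : Type*} [Semigroup E] [Zero E] (a : E) {s : List E} (hs : s ≠ []) :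
    mprod (a :: s) = a * mprod s := by
  obtain ⟨b, t, rfl⟩ := List.exists_cons_of_ne_nil hs
  exact List.foldl_assoc

variable {E : Type*} [NonUnitalSeminormedRing E]

theorem norm_mprod_map_le {ι : Type*} {φ : ι → E} {r : ℝ} (hφ : ∀ i, ‖φ i‖ ≤ r) :
    ∀ s : List ι, ‖mprod (s.map φ)‖ ≤ r ^ s.length
  | [] => by simp [mprod]
  | [a] => by simpa [mprod] using hφ a
  | a :: b :: s => by
    rw [List.map_cons, mprod_cons _ (by simp), List.length_cons, pow_succ']
    exact (norm_mul_le _ _).trans <| mul_le_mul (hφ a) (norm_mprod_map_le hφ (b :: s))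
      (norm_nonneg _) ((norm_nonneg _).trans (hφ a))

theorem norm_mprod_map_sub_le {ι : Type*} {φ ψ : ι → E} {r d : ℝ} (hφ : ∀ i, ‖φ i‖ ≤ r)
    (hψ : ∀ i, ‖ψ i‖ ≤ r) (hd : ∀ i, ‖φ i - ψ i‖ ≤ d) :
    ∀ s : List ι,
      ‖mprod (s.map φ) - mprod (s.map ψ)‖ ≤ s.length * r ^ (s.length - 1) * d
  | [] => by simp [mprod]
  | [a] => by simpa [mprod] using hd a
  | a :: b :: s => by
    have ih := norm_mprod_map_sub_le hφ hψ hd (b :: s)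
    have hP := norm_mprod_map_le hφ (b :: s)
    have hr : 0 ≤ r := (norm_nonneg _).trans (hφ a)
    have hd0 : 0 ≤ d := (norm_nonneg _).trans (hd a)
    simp only [List.map_cons, mprod_cons _ (List.cons_ne_nil _ _)] at ih hP ⊢
    set P := mprod (φ b :: s.map φ)
    set Q := mprod (ψ b :: s.map ψ)
    calc ‖φ a * P - ψ a * Q‖ = ‖(φ a - ψ a) * P + ψ a * (P - Q)‖ := by
          rw [sub_mul, mul_sub, sub_add_sub_cancel]
      _ ≤ ‖φ a - ψ a‖ * ‖P‖ + ‖ψ a‖ * ‖P - Q‖ :=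
          (norm_add_le _ _).trans (add_le_add (norm_mul_le _ _) (norm_mul_le _ _))
      _ ≤ d * r ^ (s.length + 1) + r * ((s.length + 1 : ℕ) * r ^ s.length * d) := by
          gcongr
          exacts [hd a, hP, hψ a, ih]
      _ = (s.length + 1 + 1 : ℕ) * r ^ (s.length + 1) * d := by push_cast; ring

variable {m : ℕ}

theorem exists_mpow_eq_mprod_map (l : Fin m → ℕ) :
    ∃ s : List (Fin m), s.length = ∑ j, l j ∧ ∀ φ : Fin m → E, mpow φ l = mprod (s.map φ) :=
  ⟨(List.finRange m).flatMap fun i => List.replicate (l i) i,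
    by simp [List.length_flatMap, Fin.sum_univ_def],
    fun φ => by simp [mpow, List.map_flatMap, List.map_replicate]⟩

theorem norm_mpow_le {φ : Fin m → E} {r : ℝ} (hφ : ‖φ‖ ≤ r) (l : Fin m → ℕ) :
    ‖mpow φ l‖ ≤ r ^ ∑ j, l j := by
  obtain ⟨s, hs, hmpow⟩ := exists_mpow_eq_mprod_map (E := E) l
  rw [hmpow, ← hs]
  exact norm_mprod_map_le (fun i => (norm_le_pi_norm φ i).trans hφ) s

theorem norm_mpow_sub_mpow_le {φ ψ : Fin m → E} {r : ℝ} (hφ : ‖φ‖ ≤ r) (hψ : ‖ψ‖ ≤ r)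
    (l : Fin m → ℕ) :
    ‖mpow φ l - mpow ψ l‖ ≤ (∑ j, l j) * r ^ ((∑ j, l j) - 1) * ‖φ - ψ‖ := by
  obtain ⟨s, hs, hmpow⟩ := exists_mpow_eq_mprod_map (E := E) l
  rw [hmpow, hmpow, ← hs]
  exact norm_mprod_map_sub_le (fun i => (norm_le_pi_norm φ i).trans hφ)
    (fun i => (norm_le_pi_norm ψ i).trans hψ) (fun i => norm_le_pi_norm (φ - ψ) i) s

end MultiPower

section MultinomialSeries

variable {ι : Type*} [Fintype ι] [DecidableEq ι]

theorem sum_multinomial_piAntidiag (k : ℕ) :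
    ∑ l ∈ piAntidiag (univ : Finset ι) k, (Nat.multinomial univ l : ℝ) =
      (Fintype.card ι : ℝ) ^ k := by
  simpa using (sum_pow_eq_sum_piAntidiag univ (fun _ : ι => (1 : ℝ)) k).symm

theorem summable_multinomial_mul_and_tsum_le {t : ℕ → ℝ} (ht : 0 ≤ t)
    (hsum : Summable fun k => (Fintype.card ι : ℝ) ^ k * t k) :
    Summable (fun l : ι → ℕ => (Nat.multinomial univ l : ℝ) * t (∑ j, l j)) ∧
      ∑' l : ι → ℕ, (Nat.multinomial univ l : ℝ) * t (∑ j, l j) ≤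
        ∑' k, (Fintype.card ι : ℝ) ^ k * t k := by
  set F := fun l : ι → ℕ => (Nat.multinomial univ l : ℝ) * t (∑ j, l j)
  have hF : 0 ≤ F := fun l => mul_nonneg (Nat.cast_nonneg _) (ht _)
  have hbound (s : Finset (ι → ℕ)) : ∑ l ∈ s, F l ≤ ∑' k, (Fintype.card ι : ℝ) ^ k * t k := by
    set deg := fun l : ι → ℕ => ∑ j, l j
    calc ∑ l ∈ s, F l = ∑ k ∈ s.image deg, ∑ l ∈ s with deg l = k, F l :=
          (sum_fiberwise_of_maps_to (fun l hl => mem_image_of_mem deg hl) F).symm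
      _ ≤ ∑ k ∈ s.image deg, ∑ l ∈ piAntidiag univ k, F l := by
          refine sum_le_sum fun k _ => sum_le_sum_of_subset_of_nonneg ?_ fun l _ _ => hF l
          intro l hl
          simpa [mem_piAntidiag, deg] using (mem_filter.1 hl).2
      _ = ∑ k ∈ s.image deg, (Fintype.card ι : ℝ) ^ k * t k := by
          refine sum_congr rfl fun k _ => ?_
          rw [← sum_multinomial_piAntidiag, sum_mul]
          exact sum_congr rfl fun l hl => by simp only [F, (mem_piAntidiag.1 hl).1]
      _ ≤ ∑' k, (Fintype.card ι : ℝ) ^ k * t k :=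
          hsum.sum_le_tsum _ fun k _ => mul_nonneg (by positivity) (ht k)
  exact ⟨summable_of_sum_le hF hbound, Real.tsum_le_of_sum_le hF hbound⟩

theorem summable_norm_and_tsum_norm_le_of_norm_le_multinomial {F : Type*}
    [SeminormedAddCommGroup F] {f : (ι → ℕ) → F} {t : ℕ → ℝ} (ht : 0 ≤ t) {S : ℝ}
    (hS : HasSum (fun k => (Fintype.card ι : ℝ) ^ k * t k) S)
    (hf : ∀ l, ‖f l‖ ≤ Nat.multinomial univ l * t (∑ j, l j)) :
    Summable (fun l => ‖f l‖) ∧ ∑' l, ‖f l‖ ≤ S := by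
  obtain ⟨hsum, hle⟩ := summable_multinomial_mul_and_tsum_le ht hS.summable
  have hnorm := hsum.of_nonneg_of_le (fun _ => norm_nonneg _) hf
  exact ⟨hnorm, (hnorm.tsum_le_tsum hf hsum).trans (hle.trans_eq hS.tsum_eq)⟩

end MultinomialSeries

section GeometricTails

variable {y : ℝ} (k₀ : ℕ)

theorem hasSum_ite_le_pow (hy0 : 0 ≤ y) (hy1 : y < 1) :
    HasSum (fun k => if k₀ ≤ k then y ^ k else 0) (y ^ k₀ / (1 - y)) := by
  rw [← hasSum_nat_add_iff' k₀, sum_eq_zero fun k hk => if_neg (by simpa using hk), sub_zero]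
  simpa [pow_add, mul_comm, div_eq_mul_inv] using
    (hasSum_geometric_of_lt_one hy0 hy1).mul_left (y ^ k₀)

theorem hasSum_ite_le_mul_pow (hy0 : 0 ≤ y) (hy1 : y < 1) :
    HasSum (fun k => if k₀ ≤ k then (k : ℝ) * y ^ k else 0)
      (y ^ k₀ * (y / (1 - y) ^ 2 + k₀ / (1 - y))) := by
  rw [← hasSum_nat_add_iff' k₀, sum_eq_zero fun k hk => if_neg (by simpa using hk), sub_zero]
  have hy : ‖y‖ < 1 := by rwa [Real.norm_of_nonneg hy0]
  rw [show y ^ k₀ * (y / (1 - y) ^ 2 + k₀ / (1 - y)) =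
      y ^ k₀ * (y / (1 - y) ^ 2) + k₀ * y ^ k₀ * (1 - y)⁻¹ by ring]
  refine (((hasSum_coe_mul_geometric_of_norm_lt_one hy).mul_left (y ^ k₀)).add
    ((hasSum_geometric_of_lt_one hy0 hy1).mul_left (k₀ * y ^ k₀))).congr_fun fun k => ?_
  rw [if_pos (Nat.le_add_left _ _)]
  push_cast
  ring

end GeometricTails

section MultiPowerSeries

variable {E F : Type*} [NonUnitalSeminormedRing E] [NormedAddCommGroup F] {m : ℕ}

/-- A family of additive maps `T l` covers both the scalar terms `μ_l·φ^l` and the products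
`w_l ⋆ φ^l` of `Gop`. -/
noncomputable def multiPowerSeries (T : (Fin m → ℕ) → E →+ F) (k₀ : ℕ) (φ : Fin m → E) : F :=
  ∑' l : Fin m → ℕ, if k₀ ≤ ∑ j, l j then T l (mpow φ l) else 0

variable {T : (Fin m → ℕ) → E →+ F} {k₀ : ℕ} {A L r : ℝ} {φ ψ : Fin m → E}

theorem summable_norm_multiPowerSeries_and_tsum_le (hA : 0 ≤ A) (hL : 0 ≤ L) (hr : 0 ≤ r)
    (hy : m * L * r < 1)
    (hT : ∀ l, k₀ ≤ ∑ j, l j → ∀ x, ‖T l x‖ ≤ A * Nat.multinomial univ l * L ^ (∑ j, l j) * ‖x‖)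
    (hφ : ‖φ‖ ≤ r) :
    Summable (fun l : Fin m → ℕ => ‖if k₀ ≤ ∑ j, l j then T l (mpow φ l) else 0‖) ∧
      ∑' l : Fin m → ℕ, ‖if k₀ ≤ ∑ j, l j then T l (mpow φ l) else 0‖ ≤
        A * ((m * L * r) ^ k₀ / (1 - m * L * r)) := by
  refine summable_norm_and_tsum_norm_le_of_norm_le_multinomial
    (t := fun k => if k₀ ≤ k then A * (L * r) ^ k else 0)
    (fun k => by dsimp only; split_ifs <;> positivity) ?_ fun l => ?_
  · refine ((hasSum_ite_le_pow k₀ (by positivity) hy).mul_left A).congr_fun fun k => ?_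
    simp only [Fintype.card_fin, mul_ite, mul_zero]
    split_ifs <;> ring
  · split_ifs with hl
    · calc ‖T l (mpow φ l)‖ ≤ A * Nat.multinomial univ l * L ^ (∑ j, l j) * r ^ (∑ j, l j) :=
            (hT l hl _).trans (by gcongr; exact norm_mpow_le hφ l)
        _ = _ := by ring
    · simp

theorem norm_multiPowerSeries_le (hA : 0 ≤ A) (hL : 0 ≤ L) (hr : 0 ≤ r) (hy : m * L * r < 1)
    (hT : ∀ l, k₀ ≤ ∑ j, l j → ∀ x, ‖T l x‖ ≤ A * Nat.multinomial univ l * L ^ (∑ j, l j) * ‖x‖)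
    (hφ : ‖φ‖ ≤ r) :
    ‖multiPowerSeries T k₀ φ‖ ≤ A * ((m * L * r) ^ k₀ / (1 - m * L * r)) :=
  have h := summable_norm_multiPowerSeries_and_tsum_le hA hL hr hy hT hφ
  (norm_tsum_le_tsum_norm h.1).trans h.2

theorem norm_multiPowerSeries_sub_le [CompleteSpace F] (hk₀ : 1 ≤ k₀) (hA : 0 ≤ A)
    (hL : 0 ≤ L) (hr : 0 < r) (hy : m * L * r < 1)
    (hT : ∀ l, k₀ ≤ ∑ j, l j → ∀ x, ‖T l x‖ ≤ A * Nat.multinomial univ l * L ^ (∑ j, l j) * ‖x‖)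
    (hφ : ‖φ‖ ≤ r) (hψ : ‖ψ‖ ≤ r) :
    ‖multiPowerSeries T k₀ φ - multiPowerSeries T k₀ ψ‖ ≤
      A * ((m * L * r) ^ k₀ * (m * L * r / (1 - m * L * r) ^ 2 + k₀ / (1 - m * L * r))) / r *
        ‖φ - ψ‖ := by
  have hdiff : multiPowerSeries T k₀ φ - multiPowerSeries T k₀ ψ =
      ∑' l : Fin m → ℕ, if k₀ ≤ ∑ j, l j then T l (mpow φ l - mpow ψ l) else 0 := by
    rw [multiPowerSeries, multiPowerSeries, ← Summable.tsum_sub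
      (summable_norm_multiPowerSeries_and_tsum_le hA hL hr.le hy hT hφ).1.of_norm
      (summable_norm_multiPowerSeries_and_tsum_le hA hL hr.le hy hT hψ).1.of_norm]
    exact tsum_congr fun l => by split_ifs <;> simp
  set D := ‖φ - ψ‖
  have hS : HasSum (fun k => (Fintype.card (Fin m) : ℝ) ^ k *
        if k₀ ≤ k then A * D / r * (k * (L * r) ^ k) else 0)
      (A * D / r *
        ((m * L * r) ^ k₀ * (m * L * r / (1 - m * L * r) ^ 2 + k₀ / (1 - m * L * r)))) := by
    refine ((hasSum_ite_le_mul_pow k₀ (by positivity) hy).mul_left (A * D / r)).congr_fun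
      fun k => ?_
    simp only [Fintype.card_fin, mul_ite, mul_zero]
    split_ifs <;> ring
  have hterm (l : Fin m → ℕ) :
      ‖if k₀ ≤ ∑ j, l j then T l (mpow φ l - mpow ψ l) else 0‖ ≤
        Nat.multinomial univ l *
          if k₀ ≤ ∑ j, l j then A * D / r * ((∑ j, l j : ℕ) * (L * r) ^ (∑ j, l j)) else 0 := by
    split_ifs with hl
    · have hdeg : (∑ j, l j) ≠ 0 := by omega
      calc ‖T l (mpow φ l - mpow ψ l)‖
          ≤ A * Nat.multinomial univ l * L ^ (∑ j, l j) * ((∑ j, l j) * r ^ ((∑ j, l j) - 1) * D) :=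
            (hT l hl _).trans (by gcongr; exact norm_mpow_sub_mpow_le hφ hψ l)
        _ = _ := by
          rw [mul_pow, ← pow_sub_one_mul hdeg r]
          field_simp
    · simp
  obtain ⟨hsum, hle⟩ := summable_norm_and_tsum_norm_le_of_norm_le_multinomial
    (fun k => by dsimp only; split_ifs <;> positivity) hS hterm
  rw [hdiff]
  exact (norm_tsum_le_tsum_norm hsum).trans (hle.trans_eq (by ring))

end MultiPowerSeries

section Nonlinearity

variable {𝕜 E : Type*} [NormedField 𝕜] [NonUnitalNormedRing E] [NormedSpace 𝕜 E] {m : ℕ}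
  {μ : (Fin m → ℕ) → Fin m → 𝕜} {w₀ : Fin m → E} {w : (Fin m → ℕ) → Fin m → E}
  {K L K₁ r : ℝ} {φ ψ : Fin m → E}

noncomputable def nonlinearity (μ : (Fin m → ℕ) → Fin m → 𝕜) (w₀ : Fin m → E)
    (w : (Fin m → ℕ) → Fin m → E) (φ : Fin m → E) : Fin m → E := fun i =>
  multiPowerSeries (fun l => DistribSMul.toAddMonoidHom E (μ l i)) 2 φ + w₀ i +
    multiPowerSeries (fun l => AddMonoidHom.mulLeft (w l i)) 1 φ

theorem norm_coeff_smul_le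
    (hμ : ∀ l : Fin m → ℕ, 2 ≤ ∑ j, l j → ∀ i,
      ‖μ l i‖ ≤ K * (Nat.multinomial univ l : ℝ) * L ^ (∑ j, l j)) (i : Fin m) :
    ∀ l : Fin m → ℕ, 2 ≤ ∑ j, l j → ∀ x : E, ‖DistribSMul.toAddMonoidHom E (μ l i) x‖ ≤
      K * Nat.multinomial univ l * L ^ (∑ j, l j) * ‖x‖ := fun l hl x =>
  (norm_smul _ _).trans_le (mul_le_mul_of_nonneg_right (hμ l hl i) (norm_nonneg x))

theorem norm_coeff_mul_le
    (hw : ∀ l : Fin m → ℕ, 1 ≤ ∑ j, l j →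
      ‖w l‖ ≤ K₁ * (Nat.multinomial univ l : ℝ) * L ^ (∑ j, l j)) (i : Fin m) :
    ∀ l : Fin m → ℕ, 1 ≤ ∑ j, l j → ∀ x : E, ‖AddMonoidHom.mulLeft (w l i) x‖ ≤
      K₁ * Nat.multinomial univ l * L ^ (∑ j, l j) * ‖x‖ := fun l hl x =>
  (norm_mul_le _ _).trans
    (mul_le_mul_of_nonneg_right ((norm_le_pi_norm (w l) i).trans (hw l hl)) (norm_nonneg x))

theorem norm_nonlinearity_le (hK : 0 ≤ K) (hL : 0 ≤ L) (hr : 0 ≤ r) (hy : m * L * r < 1)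
    (hμ : ∀ l : Fin m → ℕ, 2 ≤ ∑ j, l j → ∀ i,
      ‖μ l i‖ ≤ K * (Nat.multinomial univ l : ℝ) * L ^ (∑ j, l j))
    (hw₀ : ‖w₀‖ ≤ K₁)
    (hw : ∀ l : Fin m → ℕ, 1 ≤ ∑ j, l j →
      ‖w l‖ ≤ K₁ * (Nat.multinomial univ l : ℝ) * L ^ (∑ j, l j))
    (hφ : ‖φ‖ ≤ r) :
    ‖nonlinearity μ w₀ w φ‖ ≤ K * ((m * L * r) ^ 2 / (1 - m * L * r)) + K₁ +
      K₁ * (m * L * r / (1 - m * L * r)) := by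
  have hK₁ : 0 ≤ K₁ := (norm_nonneg _).trans hw₀
  refine (pi_norm_le_iff_of_nonneg (by positivity)).2 fun i => (norm_add₃_le).trans ?_
  gcongr
  · exact norm_multiPowerSeries_le hK hL hr hy (norm_coeff_smul_le hμ i) hφ
  · exact (norm_le_pi_norm w₀ i).trans hw₀
  · simpa using norm_multiPowerSeries_le hK₁ hL hr hy (norm_coeff_mul_le hw i) hφ

theorem norm_nonlinearity_sub_le [CompleteSpace E] (hK : 0 ≤ K) (hL : 0 ≤ L) (hK₁ : 0 ≤ K₁)
    (hr : 0 < r) (hy : m * L * r < 1)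
    (hμ : ∀ l : Fin m → ℕ, 2 ≤ ∑ j, l j → ∀ i,
      ‖μ l i‖ ≤ K * (Nat.multinomial univ l : ℝ) * L ^ (∑ j, l j))
    (hw : ∀ l : Fin m → ℕ, 1 ≤ ∑ j, l j →
      ‖w l‖ ≤ K₁ * (Nat.multinomial univ l : ℝ) * L ^ (∑ j, l j))
    (hφ : ‖φ‖ ≤ r) (hψ : ‖ψ‖ ≤ r) :
    ‖nonlinearity μ w₀ w φ - nonlinearity μ w₀ w ψ‖ ≤
      (K * ((m * L * r) ^ 2 * (m * L * r / (1 - m * L * r) ^ 2 + 2 / (1 - m * L * r))) +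
        K₁ * (m * L * r * (m * L * r / (1 - m * L * r) ^ 2 + 1 / (1 - m * L * r)))) / r *
        ‖φ - ψ‖ := by
  refine (pi_norm_le_iff_of_nonneg (by positivity)).2 fun i => ?_
  have hsplit : (nonlinearity μ w₀ w φ - nonlinearity μ w₀ w ψ) i =
      (multiPowerSeries (fun l => DistribSMul.toAddMonoidHom E (μ l i)) 2 φ -
        multiPowerSeries (fun l => DistribSMul.toAddMonoidHom E (μ l i)) 2 ψ) +
      (multiPowerSeries (fun l => AddMonoidHom.mulLeft (w l i)) 1 φ -
        multiPowerSeries (fun l => AddMonoidHom.mulLeft (w l i)) 1 ψ) := by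
    simp only [nonlinearity, Pi.sub_apply]; abel
  rw [hsplit, add_div, add_mul]
  refine (norm_add_le _ _).trans (add_le_add ?_ ?_)
  · simpa using norm_multiPowerSeries_sub_le (by norm_num) hK hL hr hy
      (norm_coeff_smul_le hμ i) hφ hψ
  · simpa using norm_multiPowerSeries_sub_le le_rfl hK₁ hL hr hy
      (norm_coeff_mul_le hw i) hφ hψ

end Nonlinearity

section Estimates

variable {y K K₁ δ c : ℝ}

theorem self_map_estimate (hy0 : 0 ≤ y) (hy : y ≤ 1 / 5) (hK₁0 : 0 ≤ K₁)
    (hK₁ : K₁ ≤ 25 * K * y ^ 2) (hδ : 0 ≤ δ) (hδK : δ * K * y ^ 2 = c / 50) :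
    δ * (K * (y ^ 2 / (1 - y)) + K₁ + K₁ * (y / (1 - y))) ≤ c := by
  have hu : (1 - y)⁻¹ ≤ 5 / 4 := by rw [inv_le_comm₀] <;> linarith
  have hu0 : 0 ≤ (1 - y)⁻¹ := inv_nonneg.2 (by linarith)
  have ha : 0 ≤ δ * K * y ^ 2 := by nlinarith
  have h25 : δ * K₁ ≤ 25 * (δ * K * y ^ 2) := by nlinarith
  have hyu : y * (1 - y)⁻¹ ≤ 1 / 4 := by nlinarith
  simp only [div_eq_mul_inv]
  nlinarith [mul_le_mul_of_nonneg_left hu ha, mul_le_mul h25 hyu (by positivity) (by positivity)]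

theorem contraction_estimate (hy0 : 0 ≤ y) (hy : y ≤ 1 / 5)
    (hK₁ : K₁ ≤ 25 * K * y ^ 2) (hδ : 0 ≤ δ) (hc : 0 < c) (hδK : δ * K * y ^ 2 = c / 50) :
    δ * ((K * (y ^ 2 * (y / (1 - y) ^ 2 + 2 / (1 - y))) +
      K₁ * (y * (y / (1 - y) ^ 2 + 1 / (1 - y)))) / c) ≤ 1 / 2 := by
  have hu : (1 - y)⁻¹ ≤ 5 / 4 := by rw [inv_le_comm₀] <;> linarith
  have hu0 : 0 ≤ (1 - y)⁻¹ := inv_nonneg.2 (by linarith)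
  have ha : 0 ≤ δ * K * y ^ 2 := by nlinarith
  have h25 : δ * K₁ ≤ 25 * (δ * K * y ^ 2) := by nlinarith
  have hX : y * (1 - y)⁻¹ ^ 2 ≤ 5 / 16 := by nlinarith
  have hyX : y * (y * (1 - y)⁻¹ ^ 2) ≤ 1 / 16 := by nlinarith
  have hyu : y * (1 - y)⁻¹ ≤ 1 / 4 := by nlinarith
  rw [mul_div_assoc', div_le_iff₀ hc]
  simp only [div_eq_mul_inv, one_mul, ← inv_pow]
  nlinarith [mul_le_mul_of_nonneg_left hu ha, mul_le_mul_of_nonneg_left hX ha,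
    mul_le_mul h25 hyX (by positivity) (by positivity),
    mul_le_mul h25 hyu (by positivity) (by positivity)]

end Estimates

theorem contraction_radius_bounds {m K L δ c : ℝ} (hm : 0 < m) (hK : 0 < K) (hL : 0 < L)
    (hδlow : 1 / (10 * m * K * L) ≤ δ) (hc : c = 1 / (50 * m ^ 2 * δ * K * L ^ 2)) :
    0 < δ ∧ 0 < c ∧ m * L * c ≤ 1 / 5 ∧ δ * K * (m * L * c) ^ 2 = c / 50 := by
  have hδ : 0 < δ := lt_of_lt_of_le (by positivity) hδlow
  rw [div_le_iff₀ (by positivity)] at hδlow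
  subst hc
  refine ⟨hδ, by positivity, ?_, by field_simp⟩
  field_simp
  nlinarith [mul_le_mul_of_nonneg_left hδlow (by positivity : (0 : ℝ) ≤ 5 * m * L)]

theorem existsUnique_isFixedPt_of_lipschitzOnWith {X : Type*} [MetricSpace X] [CompleteSpace X]
    {f : X → X} {s : Set X} (hs : IsClosed s) (hne : s.Nonempty) (hmaps : MapsTo f s s)
    {q : NNReal} (hq : q < 1) (hf : LipschitzOnWith q f s) : ∃! x, x ∈ s ∧ IsFixedPt f x := by
  have hcontr : ContractingWith q (hmaps.restrict f s s) :=
    ⟨hq, hf.mapsToRestrict hmaps⟩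
  obtain ⟨x₀, hx₀⟩ := hne
  obtain ⟨x, hxs, hfx, -⟩ := hcontr.exists_fixedPoint' hs.isComplete hmaps hx₀ (edist_ne_top _ _)
  refine ⟨x, ⟨hxs, hfx⟩, fun z ⟨hzs, hfz⟩ => ?_⟩
  exact congrArg Subtype.val (hcontr.fixedPoint_unique' (x := ⟨z, hzs⟩) (y := ⟨x, hxs⟩)
    (Subtype.ext hfz) (Subtype.ext hfx))

theorem Gop_eq_apply_nonlinearity {E : Type*} [NonUnitalNormedCommRing E] [NormedSpace ℂ E]
    {m : ℕ} (μ : (Fin m → ℕ) → Fin m → ℂ) (w₀ : Fin m → E) (w : (Fin m → ℕ) → Fin m → E)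
    (Θ : (Fin m → E) →ₗ[ℂ] (Fin m → E)) (φ : Fin m → E) :
    Gop μ w₀ w Θ φ = Θ (nonlinearity μ w₀ w φ) :=
  rfl

theorem convolution_equation_fixed_point_general
    {E : Type*} [NonUnitalNormedCommRing E] [NormedSpace ℂ E] [CompleteSpace E]
    (m : ℕ) (hm : 1 ≤ m)
    (K L K₁ δ c : ℝ) (hK : 0 < K) (hL : 0 < L)
    (μ : (Fin m → ℕ) → Fin m → ℂ) (w₀ : Fin m → E) (w : (Fin m → ℕ) → Fin m → E)
    (Θ : (Fin m → E) →ₗ[ℂ] (Fin m → E))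
    (hμ : ∀ l : Fin m → ℕ, 2 ≤ ∑ j, l j → ∀ i,
      ‖μ l i‖ ≤ K * (Nat.multinomial Finset.univ l : ℝ) * L ^ (∑ j, l j))
    (hw₀ : ‖w₀‖ ≤ K₁)
    (hw : ∀ l : Fin m → ℕ, 1 ≤ ∑ j, l j →
      ‖w l‖ ≤ K₁ * (Nat.multinomial Finset.univ l : ℝ) * L ^ (∑ j, l j))
    (hΘ : ∀ v : Fin m → E, ‖Θ v‖ ≤ δ * ‖v‖)
    (hδlow : 1 / (10 * m * K * L) ≤ δ)
    (hc : c = 1 / (50 * m ^ 2 * δ * K * L ^ 2))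
    (hK₁c : K₁ ≤ (5 * c * m * L) ^ 2 * K) :
    -- G maps the ball ‖φ‖ ≤ c to itself, with absolutely convergent defining series
    (∀ φ : Fin m → E, ‖φ‖ ≤ c →
      (∀ i, Summable fun l : Fin m → ℕ =>
        ‖if 2 ≤ ∑ j, l j then (μ l i) • mpow φ l else 0‖) ∧
      (∀ i, Summable fun l : Fin m → ℕ =>
        ‖if 1 ≤ ∑ j, l j then (w l i) * mpow φ l else 0‖) ∧
      ‖Gop μ w₀ w Θ φ‖ ≤ c) ∧
    -- G is ½-Lipschitz on the ball
    (∀ φ ψ : Fin m → E, ‖φ‖ ≤ c → ‖ψ‖ ≤ c →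
      ‖Gop μ w₀ w Θ φ - Gop μ w₀ w Θ ψ‖ ≤ (1 / 2) * ‖φ - ψ‖) ∧
    -- unique fixed point in the ball
    (∃! y : Fin m → E, ‖y‖ ≤ c ∧ Gop μ w₀ w Θ y = y) := by
  obtain ⟨hδ, hc0, hy, hδK⟩ := contraction_radius_bounds (Nat.cast_pos.2 hm) hK hL hδlow hc
  have hK₁ : 0 ≤ K₁ := (norm_nonneg _).trans hw₀
  have hK₁y : K₁ ≤ 25 * K * (m * L * c) ^ 2 := hK₁c.trans_eq (by ring)
  have hy1 : m * L * c < 1 := by linarith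
  have hself (φ : Fin m → E) (hφ : ‖φ‖ ≤ c) : ‖Gop μ w₀ w Θ φ‖ ≤ c :=
    calc ‖Gop μ w₀ w Θ φ‖ ≤ δ * ‖nonlinearity μ w₀ w φ‖ := hΘ _
      _ ≤ δ * (K * ((m * L * c) ^ 2 / (1 - m * L * c)) + K₁ +
            K₁ * (m * L * c / (1 - m * L * c))) := by
          gcongr
          exact norm_nonlinearity_le hK.le hL.le hc0.le hy1 hμ hw₀ hw hφ
      _ ≤ c := self_map_estimate (by positivity) hy hK₁ hK₁y hδ.le hδK
  have hlip (φ ψ : Fin m → E) (hφ : ‖φ‖ ≤ c) (hψ : ‖ψ‖ ≤ c) :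
      ‖Gop μ w₀ w Θ φ - Gop μ w₀ w Θ ψ‖ ≤ 1 / 2 * ‖φ - ψ‖ := by
    rw [Gop_eq_apply_nonlinearity, Gop_eq_apply_nonlinearity, ← map_sub]
    refine (hΘ _).trans <| (mul_le_mul_of_nonneg_left (norm_nonlinearity_sub_le hK.le hL.le
      hK₁ hc0 hy1 hμ hw hφ hψ) hδ.le).trans ?_
    rw [← mul_assoc]
    exact mul_le_mul_of_nonneg_right
      (contraction_estimate (by positivity) hy hK₁y hδ.le hc0 hδK) (norm_nonneg _)
  refine ⟨fun φ hφ => ⟨fun i => ?_, fun i => ?_, hself φ hφ⟩, hlip, ?_⟩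
  · simpa using (summable_norm_multiPowerSeries_and_tsum_le hK.le hL.le hc0.le hy1
      (norm_coeff_smul_le hμ i) hφ).1
  · simpa using (summable_norm_multiPowerSeries_and_tsum_le hK₁ hL.le hc0.le hy1
      (norm_coeff_mul_le hw i) hφ).1
  · exact existsUnique_isFixedPt_of_lipschitzOnWith (s := {φ | ‖φ‖ ≤ c})
      (isClosed_le continuous_norm continuous_const) ⟨0, by simpa using hc0.le⟩ hself
      (q := 1 / 2) (by norm_num) (LipschitzOnWith.of_dist_le_mul fun φ hφ ψ hψ => by
        simpa [dist_eq_norm] using hlip φ ψ hφ hψ)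

/-- the contraction argument of Proposition 4.2 of the paper, in an
abstract commutative non-unital complex Banach algebra. Under the stated bounds on the
data, `G` maps the ball of radius `c` into itself with absolutely convergent defining
series, is `½`-Lipschitz there, and hence has a unique fixed point `ỹ` with `‖ỹ‖ ≤ c`. -/
theorem convolution_equation_fixed_point
    {E : Type*} [NonUnitalNormedCommRing E] [NormedSpace ℂ E] [CompleteSpace E]
    (m : ℕ) (hm : 1 ≤ m)
    (K L K₁ δ c : ℝ) (hK : 0 < K) (hL : 0 < L) (hK₁ : 0 < K₁) (hδ : 0 < δ)
    (μ : (Fin m → ℕ) → Fin m → ℂ) (w₀ : Fin m → E) (w : (Fin m → ℕ) → Fin m → E)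
    (Θ : (Fin m → E) →ₗ[ℂ] (Fin m → E))
    (hμ : ∀ l : Fin m → ℕ, 2 ≤ ∑ j, l j → ∀ i,
      ‖μ l i‖ ≤ K * (Nat.multinomial Finset.univ l : ℝ) * L ^ (∑ j, l j))
    (hw₀ : ‖w₀‖ ≤ K₁)
    (hw : ∀ l : Fin m → ℕ, 1 ≤ ∑ j, l j →
      ‖w l‖ ≤ K₁ * (Nat.multinomial Finset.univ l : ℝ) * L ^ (∑ j, l j))
    (hΘ : ∀ v : Fin m → E, ‖Θ v‖ ≤ δ * ‖v‖)
    (hδlow : 1 / (10 * m * K * L) ≤ δ)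
    (hc : c = 1 / (50 * m ^ 2 * δ * K * L ^ 2))
    (hK₁c : K₁ ≤ (5 * c * m * L) ^ 2 * K) :
    -- G maps the ball ‖φ‖ ≤ c to itself, with absolutely convergent defining series
    (∀ φ : Fin m → E, ‖φ‖ ≤ c →
      (∀ i, Summable fun l : Fin m → ℕ =>
        ‖if 2 ≤ ∑ j, l j then (μ l i) • mpow φ l else 0‖) ∧
      (∀ i, Summable fun l : Fin m → ℕ =>
        ‖if 1 ≤ ∑ j, l j then (w l i) * mpow φ l else 0‖) ∧
      ‖Gop μ w₀ w Θ φ‖ ≤ c) ∧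
    -- G is ½-Lipschitz on the ball
    (∀ φ ψ : Fin m → E, ‖φ‖ ≤ c → ‖ψ‖ ≤ c →
      ‖Gop μ w₀ w Θ φ - Gop μ w₀ w Θ ψ‖ ≤ (1 / 2) * ‖φ - ψ‖) ∧
    -- unique fixed point in the ball
    (∃! y : Fin m → E, ‖y‖ ≤ c ∧ Gop μ w₀ w Θ y = y) :=
  convolution_equation_fixed_point_general m hm K L K₁ δ c hK hL μ w₀ w Θ hμ hw₀ hw hΘ hδlow hc hK₁c
end
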